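/- arXiv:1611.08444 — 9 statements merged into one kernel-verified Lean document; each statement's English description precedes it below -/
import Mathlib

section
/- Let (X, B) be a measurable space, let (Θ, G, Π) be a probability space parametrizing probability measures {P_θ : θ ∈ Θ} on (X, B) such that θ ↦ P_θ(A) is measurable for every A ∈ B, and let Π(·|X) denote a posterior satisfying Bayes's rule ∫_A Π(V|x) dP^Π(x) = ∫_V P_θ(A) dΠ(θ) for all A ∈ B, V ∈ G, where P^Π = ∫ P_θ dΠ(θ). Then for any B, V ∈ G with Π(B) > 0 and any measurable test φ : X → [0,1], the inequality ∫ P_θ[Π(V|X)] dΠ(θ|B) ≤ ∫ P_θ[φ(X)] dΠ(θ|B) + (1/Π(B)) ∫_V P_θ[1 − φ(X)] dΠ(θ) holds, where Π(·|B) is Π conditioned on B. -/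
open MeasureTheory Filter Asymptotics

/-- Lemma 2.2 (testineq): the posterior concentration inequality. -/
theorem stmt0
    {X : Type*} [MeasurableSpace X] {Θ : Type*} [MeasurableSpace Θ]
    (Pri : Measure Θ) [IsProbabilityMeasure Pri]
    (P : Θ → Measure X) (hP : ∀ θ, IsProbabilityMeasure (P θ))
    (hPmeas : Measurable P)
    (post : Set Θ → X → ℝ)
    (hpostmeas : ∀ V, MeasurableSet V → Measurable (post V))
    (hpost01 : ∀ V x, 0 ≤ post V x ∧ post V x ≤ 1)
    (hBayes : ∀ A, MeasurableSet A → ∀ V, MeasurableSet V →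
      ∫ x in A, post V x ∂(Pri.bind P) = ∫ θ in V, (P θ A).toReal ∂Pri)
    (B V : Set Θ) (hB : MeasurableSet B) (hV : MeasurableSet V)
    (hPriB : 0 < (Pri B).toReal)
    (φ : X → ℝ) (hφmeas : Measurable φ) (hφ01 : ∀ x, 0 ≤ φ x ∧ φ x ≤ 1) :
    (Pri B).toReal⁻¹ * ∫ θ in B, (∫ x, post V x ∂(P θ)) ∂Pri ≤
      (Pri B).toReal⁻¹ * ∫ θ in B, (∫ x, φ x ∂(P θ)) ∂Pri +
      (Pri B).toReal⁻¹ * ∫ θ in V, (∫ x, (1 - φ x) ∂(P θ)) ∂Pri := by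
  have hbind_prob : IsProbabilityMeasure (Pri.bind P) := by
    constructor
    rw [Measure.bind_apply MeasurableSet.univ hPmeas.aemeasurable]
    calc ∫⁻ θ, P θ Set.univ ∂Pri = ∫⁻ _, 1 ∂Pri := by
          congr 1; funext θ; exact (hP θ).measure_univ
      _ = 1 := by simp
  -- ENNReal versions of the three integrands
  set pv : X → ENNReal := fun x => ENNReal.ofReal (post V x) with hpv_def
  set fφ : X → ENNReal := fun x => ENNReal.ofReal (φ x) with hfφ_def
  set g : X → ENNReal := fun x => ENNReal.ofReal (1 - φ x) with hg_def
  have hpvmeas : Measurable pv := (hpostmeas V hV).ennreal_ofReal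
  have hfφmeas : Measurable fφ := hφmeas.ennreal_ofReal
  have hgmeas : Measurable g := (measurable_const.sub hφmeas).ennreal_ofReal
  have hpv1 : ∀ x, pv x ≤ 1 := fun x => ENNReal.ofReal_le_one.mpr (hpost01 V x).2
  have hfφ1 : ∀ x, fφ x ≤ 1 := fun x => ENNReal.ofReal_le_one.mpr (hφ01 x).2
  have hg1 : ∀ x, g x ≤ 1 := fun x => ENNReal.ofReal_le_one.mpr (by linarith [(hφ01 x).1])
  -- inner lintegral bounds
  have hIle1 : ∀ (h : X → ENNReal), (∀ x, h x ≤ 1) → ∀ θ, ∫⁻ x, h x ∂(P θ) ≤ 1 := by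
    intro h hh θ
    calc ∫⁻ x, h x ∂(P θ) ≤ ∫⁻ _, 1 ∂(P θ) := lintegral_mono hh
      _ = 1 := by simp [(hP θ).measure_univ]
  -- measurability of θ ↦ ∫⁻ h dPθ
  have hImeas : ∀ (h : X → ENNReal), Measurable h →
      Measurable fun θ => ∫⁻ x, h x ∂(P θ) :=
    fun h hh => (Measure.measurable_lintegral hh).comp hPmeas
  -- rewrite inner Bochner integrals as toReal of lintegrals
  have hinner : ∀ (f : X → ℝ), Measurable f → (∀ x, 0 ≤ f x) → ∀ θ,
      ∫ x, f x ∂(P θ) = (∫⁻ x, ENNReal.ofReal (f x) ∂(P θ)).toReal := by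
    intro f hf hf0 θ
    have := integral_toReal (μ := P θ) (f := fun x => ENNReal.ofReal (f x))
      hf.ennreal_ofReal.aemeasurable (ae_of_all _ fun x => ENNReal.ofReal_lt_top)
    rw [← this]
    congr 1; funext x; exact (ENNReal.toReal_ofReal (hf0 x)).symm
  -- rewrite outer integrals
  have houter : ∀ (h : X → ENNReal), Measurable h → (∀ x, h x ≤ 1) → ∀ (W : Set Θ),
      ∫ θ in W, (∫⁻ x, h x ∂(P θ)).toReal ∂Pri
        = (∫⁻ θ in W, (∫⁻ x, h x ∂(P θ)) ∂Pri).toReal := by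
    intro h hh hh1 W
    exact integral_toReal ((hImeas h hh).aemeasurable.restrict)
      (ae_of_all _ fun θ => lt_of_le_of_lt (hIle1 h hh1 θ) ENNReal.one_lt_top)
  have e1 : ∫ θ in B, (∫ x, post V x ∂(P θ)) ∂Pri
      = (∫⁻ θ in B, (∫⁻ x, pv x ∂(P θ)) ∂Pri).toReal := by
    rw [← houter pv hpvmeas hpv1 B]
    exact setIntegral_congr_fun hB fun θ _ =>
      hinner (post V) (hpostmeas V hV) (fun x => (hpost01 V x).1) θ
  have e2 : ∫ θ in B, (∫ x, φ x ∂(P θ)) ∂Pri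
      = (∫⁻ θ in B, (∫⁻ x, fφ x ∂(P θ)) ∂Pri).toReal := by
    rw [← houter fφ hfφmeas hfφ1 B]
    exact setIntegral_congr_fun hB fun θ _ =>
      hinner φ hφmeas (fun x => (hφ01 x).1) θ
  have e3 : ∫ θ in V, (∫ x, (1 - φ x) ∂(P θ)) ∂Pri
      = (∫⁻ θ in V, (∫⁻ x, g x ∂(P θ)) ∂Pri).toReal := by
    rw [← houter g hgmeas hg1 V]
    exact setIntegral_congr_fun hV fun θ _ =>
      hinner (fun x => 1 - φ x) (measurable_const.sub hφmeas)
        (fun x => by simpa using sub_nonneg.mpr (hφ01 x).2) θ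
  set a := ∫⁻ θ in B, (∫⁻ x, pv x ∂(P θ)) ∂Pri with ha_def
  set b := ∫⁻ θ in B, (∫⁻ x, fφ x ∂(P θ)) ∂Pri with hb_def
  set d := ∫⁻ θ in V, (∫⁻ x, g x ∂(P θ)) ∂Pri with hd_def
  have hWle1 : ∀ (h : X → ENNReal), (∀ x, h x ≤ 1) → ∀ (W : Set Θ),
      ∫⁻ θ in W, (∫⁻ x, h x ∂(P θ)) ∂Pri ≤ 1 := by
    intro h hh1 W
    calc ∫⁻ θ in W, (∫⁻ x, h x ∂(P θ)) ∂Pri ≤ ∫⁻ _ in W, 1 ∂Pri :=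
          lintegral_mono fun θ => hIle1 h hh1 θ
      _ = Pri W := by simp
      _ ≤ 1 := prob_le_one
  have hbne : b ≠ ⊤ := (lt_of_le_of_lt (hWle1 fφ hfφ1 B) ENNReal.one_lt_top).ne
  have hdne : d ≠ ⊤ := (lt_of_le_of_lt (hWle1 g hg1 V) ENNReal.one_lt_top).ne
  -- the key measure equality from Bayes's rule
  have hmeq : (Pri.bind P).withDensity pv = (Pri.restrict V).bind P := by
    ext A hA
    rw [withDensity_apply _ hA, Measure.bind_apply hA hPmeas.aemeasurable]
    have hL : ∫⁻ x in A, pv x ∂(Pri.bind P)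
        = ENNReal.ofReal (∫ x in A, post V x ∂(Pri.bind P)) := by
      rw [ofReal_integral_eq_lintegral_ofReal]
      · exact ((integrable_const (1:ℝ)).mono'
          ((hpostmeas V hV).aestronglyMeasurable.restrict)
          (ae_of_all _ fun x => by
            rw [Real.norm_eq_abs, abs_of_nonneg (hpost01 V x).1]
            exact (hpost01 V x).2))
      · exact ae_of_all _ fun x => (hpost01 V x).1
    have hR : ∫⁻ θ, P θ A ∂(Pri.restrict V)
        = ENNReal.ofReal (∫ θ in V, (P θ A).toReal ∂Pri) := by
      have hmeasPA : Measurable fun θ => P θ A := (Measure.measurable_coe hA).comp hPmeas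
      have : ∀ θ, P θ A = ENNReal.ofReal ((P θ A).toReal) := fun θ =>
        (ENNReal.ofReal_toReal (measure_ne_top _ _)).symm
      calc ∫⁻ θ, P θ A ∂(Pri.restrict V)
          = ∫⁻ θ, ENNReal.ofReal ((P θ A).toReal) ∂(Pri.restrict V) := by
            congr 1; funext θ; exact this θ
        _ = ENNReal.ofReal (∫ θ in V, (P θ A).toReal ∂Pri) := by
            rw [ofReal_integral_eq_lintegral_ofReal]
            · exact ((integrable_const (1:ℝ)).mono'
                (hmeasPA.ennreal_toReal.aestronglyMeasurable.restrict)
                (ae_of_all _ fun θ => by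
                  rw [Real.norm_eq_abs, abs_of_nonneg ENNReal.toReal_nonneg]
                  exact ENNReal.toReal_le_of_le_ofReal zero_le_one
                    (by simpa using prob_le_one (μ := P θ) (s := A))))
            · exact ae_of_all _ fun θ => ENNReal.toReal_nonneg
    rw [hL, hR, hBayes A hA V hV]
  -- pointwise test inequality
  have hpt : ∀ x, pv x ≤ fφ x + g x * pv x := by
    intro x
    have h1 : post V x ≤ φ x + (1 - φ x) * post V x := by
      nlinarith [(hpost01 V x).1, (hpost01 V x).2, (hφ01 x).1, (hφ01 x).2]
    calc pv x ≤ ENNReal.ofReal (φ x + (1 - φ x) * post V x) :=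
          ENNReal.ofReal_le_ofReal h1
      _ = fφ x + g x * pv x := by
          rw [ENNReal.ofReal_add (hφ01 x).1
            (mul_nonneg (by linarith [(hφ01 x).2]) (hpost01 V x).1),
            ENNReal.ofReal_mul (by linarith [(hφ01 x).2])]
  -- key inequality in ENNReal
  have key : a ≤ b + d := by
    have step1 : a ≤ b + ∫⁻ θ in B, (∫⁻ x, g x * pv x ∂(P θ)) ∂Pri := by
      rw [← lintegral_add_left ((hImeas fφ hfφmeas))]
      refine lintegral_mono fun θ => ?_
      rw [← lintegral_add_left hfφmeas]
      exact lintegral_mono hpt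
    have step2 : ∫⁻ θ in B, (∫⁻ x, g x * pv x ∂(P θ)) ∂Pri ≤ d := by
      calc ∫⁻ θ in B, (∫⁻ x, g x * pv x ∂(P θ)) ∂Pri
          ≤ ∫⁻ θ, (∫⁻ x, g x * pv x ∂(P θ)) ∂Pri :=
            setLIntegral_le_lintegral _ _
        _ = ∫⁻ x, g x * pv x ∂(Pri.bind P) :=
            (Measure.lintegral_bind hPmeas.aemeasurable (hgmeas.mul hpvmeas).aemeasurable).symm
        _ = ∫⁻ x, pv x * g x ∂(Pri.bind P) := by
            congr 1; funext x; exact mul_comm _ _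
        _ = ∫⁻ x, g x ∂((Pri.bind P).withDensity pv) :=
            (lintegral_withDensity_eq_lintegral_mul _ hpvmeas hgmeas).symm
        _ = ∫⁻ x, g x ∂((Pri.restrict V).bind P) := by rw [hmeq]
        _ = ∫⁻ θ, (∫⁻ x, g x ∂(P θ)) ∂(Pri.restrict V) :=
            Measure.lintegral_bind hPmeas.aemeasurable hgmeas.aemeasurable
        _ = d := rfl
    exact step1.trans (add_le_add le_rfl step2)
  -- conclude
  rw [e1, e2, e3, ← mul_add]
  refine mul_le_mul_of_nonneg_left ?_ (inv_nonneg.mpr ENNReal.toReal_nonneg)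
  rw [← ENNReal.toReal_add hbne hdne]
  exact ENNReal.toReal_mono (ENNReal.add_ne_top.mpr ⟨hbne, hdne⟩) key
end

section
/- Let (P_n) and (Q_n) be sequences of probability measures on measurable spaces (X_n, B_n), and a_n ↓ 0. If for every ε > 0 there exists δ > 0 such that Q_n(dP_n/dQ_n < δ a_n) < ε for all large enough n, then Q_n is a_n-remotely contiguous with respect to P_n; that is, for every sequence of measurable φ_n : X_n → [0,1], P_n[φ_n] = o(a_n) implies Q_n[φ_n] = o(1). -/
/-!
Split `Q n [φ n]` along the set where `dP n/dQ n < δ a n`. On that set `φ n ≤ 1`, so its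
contribution is at most its `Q n`-measure, which the criterion makes smaller than `ε`. Off it,
`φ n ≤ φ n · (dP n/dQ n) / (δ a n)`, and the `Q n`-integral of `φ n · dP n/dQ n` is at most
`P n [φ n] = o(a n)`, so this contribution tends to `0`.
-/

open MeasureTheory Filter Asymptotics Topology
open scoped ENNReal

namespace MeasureTheory.Measure

variable {X : Type*} [MeasurableSpace X]

lemma lintegral_mul_rnDeriv_le (P Q : Measure X) {f : X → ℝ≥0∞} (hf : Measurable f) :
    ∫⁻ x, f x * P.rnDeriv Q x ∂Q ≤ ∫⁻ x, f x ∂P := by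
  calc ∫⁻ x, f x * P.rnDeriv Q x ∂Q = ∫⁻ x, f x ∂(Q.withDensity (P.rnDeriv Q)) := by
        rw [lintegral_withDensity_eq_lintegral_mul _ (measurable_rnDeriv P Q) hf]
        simp only [Pi.mul_apply, mul_comm]
    _ ≤ ∫⁻ x, f x ∂P := lintegral_mono' (withDensity_rnDeriv_le P Q) le_rfl

lemma lintegral_le_measure_rnDeriv_lt_add (P Q : Measure X) {f : X → ℝ≥0∞}
    (hf : Measurable f) (hf1 : ∀ x, f x ≤ 1) {c : ℝ} (hc : 0 < c) :
    ∫⁻ x, f x ∂Q ≤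
      Q {x | (P.rnDeriv Q x).toReal < c} + (∫⁻ x, f x ∂P) / ENNReal.ofReal c := by
  set A := {x | (P.rnDeriv Q x).toReal < c}
  have hA : MeasurableSet A := (measurable_rnDeriv P Q).ennreal_toReal measurableSet_Iio
  have on_A : ∫⁻ x in A, f x ∂Q ≤ Q A :=
    (setLIntegral_mono measurable_const fun x _ => hf1 x).trans_eq (setLIntegral_one A)
  have off_A : (∫⁻ x in Aᶜ, f x ∂Q) * ENNReal.ofReal c ≤ ∫⁻ x, f x ∂P := by
    calc (∫⁻ x in Aᶜ, f x ∂Q) * ENNReal.ofReal c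
        = ∫⁻ x in Aᶜ, f x * ENNReal.ofReal c ∂Q := (lintegral_mul_const _ hf).symm
      _ ≤ ∫⁻ x in Aᶜ, f x * P.rnDeriv Q x ∂Q := by
          refine setLIntegral_mono (hf.mul (measurable_rnDeriv P Q)) fun x hx => ?_
          exact mul_le_mul_right (ENNReal.ofReal_le_of_le_toReal (not_lt.1 hx)) _
      _ ≤ ∫⁻ x, f x * P.rnDeriv Q x ∂Q := setLIntegral_le_lintegral _ _
      _ ≤ ∫⁻ x, f x ∂P := lintegral_mul_rnDeriv_le P Q hf
  rw [← lintegral_add_compl f hA]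
  exact add_le_add on_A
    ((ENNReal.le_div_iff_mul_le (Or.inl (by simpa using hc)) (Or.inl ENNReal.ofReal_ne_top)).2
      off_A)

lemma integral_le_measure_rnDeriv_lt_add (P Q : Measure X) [IsFiniteMeasure P]
    [IsFiniteMeasure Q] {φ : X → ℝ} (hφ : Measurable φ) (hφ0 : ∀ x, 0 ≤ φ x)
    (hφ1 : ∀ x, φ x ≤ 1) {c : ℝ} (hc : 0 < c) :
    ∫ x, φ x ∂Q ≤ (Q {x | (P.rnDeriv Q x).toReal < c}).toReal + (∫ x, φ x ∂P) / c := by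
  have hf1 : ∀ x, ENNReal.ofReal (φ x) ≤ 1 := fun x => ENNReal.ofReal_le_one.2 (hφ1 x)
  have toReal_lintegral (μ : Measure X) :
      ∫ x, φ x ∂μ = (∫⁻ x, ENNReal.ofReal (φ x) ∂μ).toReal :=
    integral_eq_lintegral_of_nonneg_ae (ae_of_all _ hφ0) hφ.aestronglyMeasurable
  have lintegral_ne_top (μ : Measure X) [IsFiniteMeasure μ] :
      ∫⁻ x, ENNReal.ofReal (φ x) ∂μ ≠ ∞ :=
    ne_top_of_le_ne_top (measure_ne_top μ Set.univ)
      ((lintegral_mono hf1).trans_eq (lintegral_one (μ := μ)))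
  have hc' : ENNReal.ofReal c ≠ 0 := by simpa using hc
  have hdiv_ne_top := ENNReal.div_ne_top (lintegral_ne_top P) hc'
  have key := ENNReal.toReal_mono (ENNReal.add_ne_top.2 ⟨measure_ne_top _ _, hdiv_ne_top⟩)
    (lintegral_le_measure_rnDeriv_lt_add P Q hφ.ennreal_ofReal hf1 hc)
  rwa [ENNReal.toReal_add (measure_ne_top _ _) hdiv_ne_top, ENNReal.toReal_div,
    ENNReal.toReal_ofReal hc.le, ← toReal_lintegral, ← toReal_lintegral] at key

end MeasureTheory.Measure

theorem stmt2_general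
    {X : ℕ → Type*} [∀ n, MeasurableSpace (X n)]
    (P Q : (n : ℕ) → Measure (X n))
    (hP : ∀ n, IsProbabilityMeasure (P n)) (hQ : ∀ n, IsProbabilityMeasure (Q n))
    (a : ℕ → ℝ) (ha0 : ∀ n, 0 < a n)
    (hcrit : ∀ ε > (0:ℝ), ∃ δ > (0:ℝ), ∀ᶠ n in atTop,
      ((Q n) {x | (((P n).rnDeriv (Q n)) x).toReal < δ * a n}).toReal < ε)
    (φ : (n : ℕ) → X n → ℝ) (hmeas : ∀ n, Measurable (φ n))
    (h01 : ∀ n x, 0 ≤ φ n x ∧ φ n x ≤ 1)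
    (ho : (fun n => ∫ x, φ n x ∂(P n)) =o[atTop] a) :
    Tendsto (fun n => ∫ x, φ n x ∂(Q n)) atTop (nhds 0) := by
  rw [NormedAddGroup.tendsto_nhds_zero]
  intro ε hε
  obtain ⟨δ, hδ, hsmall⟩ := hcrit (ε / 2) (half_pos hε)
  have hratio : Tendsto (fun n => (∫ x, φ n x ∂(P n)) / (δ * a n)) atTop (𝓝 0) := by
    have := ho.tendsto_div_nhds_zero.div_const δ
    rw [zero_div] at this
    exact this.congr fun n => by ring
  filter_upwards [hsmall, hratio.eventually (gt_mem_nhds (half_pos hε))] with n hQn hPn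
  rw [Real.norm_of_nonneg (integral_nonneg fun x => (h01 n x).1)]
  linarith [Measure.integral_le_measure_rnDeriv_lt_add (P n) (Q n) (hmeas n)
    (fun x => (h01 n x).1) (fun x => (h01 n x).2) (mul_pos hδ (ha0 n))]

/-- Lemma 3.2 (ii): the Radon–Nikodym small-likelihood criterion implies
`a n`-remote contiguity of `Q n` with respect to `P n`. -/
theorem stmt2
    {X : ℕ → Type*} [∀ n, MeasurableSpace (X n)]
    (P Q : (n : ℕ) → Measure (X n))
    (hP : ∀ n, IsProbabilityMeasure (P n)) (hQ : ∀ n, IsProbabilityMeasure (Q n))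
    (a : ℕ → ℝ) (ha0 : ∀ n, 0 < a n) (haanti : Antitone a)
    (halim : Tendsto a atTop (nhds 0))
    (hcrit : ∀ ε > (0:ℝ), ∃ δ > (0:ℝ), ∀ᶠ n in atTop,
      ((Q n) {x | (((P n).rnDeriv (Q n)) x).toReal < δ * a n}).toReal < ε)
    (φ : (n : ℕ) → X n → ℝ) (hmeas : ∀ n, Measurable (φ n))
    (h01 : ∀ n x, 0 ≤ φ n x ∧ φ n x ≤ 1)
    (ho : (fun n => ∫ x, φ n x ∂(P n)) =o[atTop] a) :
    Tendsto (fun n => ∫ x, φ n x ∂(Q n)) atTop (nhds 0) :=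
  stmt2_general P Q hP hQ a ha0 hcrit φ hmeas h01 ho
end

section
/- Let (P_n) and (Q_n) be sequences of probability measures on measurable spaces (X_n, B_n), and a_n ↓ 0. If for every ε > 0 there exists c > 0 such that ‖Q_n − Q_n ∧ c·a_n^{-1} P_n‖ < ε for all large enough n, then P_n[φ_n] = o(a_n) implies Q_n[φ_n] = o(1) for every sequence of measurable φ_n : X_n → [0,1]. -/
/-!
Split `Q n` as `(Q n - Q n ⊓ k • P n) + Q n ⊓ k • P n` with `k = c / a n`. Against the first part a
test `0 ≤ φ ≤ 1` has mass at most the total variation in the criterion, which is `< ε / 2` for a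
suitable `c`; against the second it is at most `k • P n[φ] = c · P n[φ] / a n`, which tends to `0`
since `P n[φ] = o(a n)`.
-/

open MeasureTheory Filter Asymptotics

open scoped ENNReal

section TruncationBound

variable {X : Type*} [MeasurableSpace X]

theorem lintegral_le_measure_sub_inf_add_lintegral (Q ν : Measure X) [IsFiniteMeasure Q]
    {f : X → ℝ≥0∞} (hf : f ≤ 1) :
    ∫⁻ x, f x ∂Q ≤ (Q - Q ⊓ ν) Set.univ + ∫⁻ x, f x ∂ν := by
  have : IsFiniteMeasure (Q ⊓ ν) := isFiniteMeasure_of_le Q inf_le_left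
  calc ∫⁻ x, f x ∂Q = ∫⁻ x, f x ∂(Q - Q ⊓ ν) + ∫⁻ x, f x ∂(Q ⊓ ν) := by
        rw [← lintegral_add_measure, Measure.sub_add_cancel_of_le inf_le_left]
    _ ≤ ∫⁻ _, 1 ∂(Q - Q ⊓ ν) + ∫⁻ x, f x ∂ν := by
        gcongr
        · exact hf _
        · exact inf_le_right
    _ = (Q - Q ⊓ ν) Set.univ + ∫⁻ x, f x ∂ν := by rw [lintegral_one]

theorem integral_le_measure_sub_inf_add_mul_integral (Q P : Measure X) [IsFiniteMeasure Q]
    [IsFiniteMeasure P] {f : X → ℝ} (hf : Measurable f) (hf0 : 0 ≤ f) (hf1 : f ≤ 1)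
    {k : ℝ} (hk : 0 ≤ k) :
    ∫ x, f x ∂Q ≤ ((Q - Q ⊓ ENNReal.ofReal k • P) Set.univ).toReal + k * ∫ x, f x ∂P := by
  have toReal_lintegral (μ : Measure X) :
      ∫ x, f x ∂μ = (∫⁻ x, ENNReal.ofReal (f x) ∂μ).toReal :=
    integral_eq_lintegral_of_nonneg_ae (.of_forall hf0) hf.aestronglyMeasurable
  have lintegral_ne_top (μ : Measure X) [IsFiniteMeasure μ] :
      ∫⁻ x, ENNReal.ofReal (f x) ∂μ ≠ ∞ :=
    (lintegral_mono (g := 1) fun x ↦ ENNReal.ofReal_le_one.2 (hf1 x)).trans_lt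
      (by simp [measure_lt_top]) |>.ne
  have hbound := lintegral_le_measure_sub_inf_add_lintegral Q (ENNReal.ofReal k • P)
    (f := fun x ↦ ENNReal.ofReal (f x)) fun x ↦ ENNReal.ofReal_le_one.2 (hf1 x)
  rw [lintegral_smul_measure, smul_eq_mul] at hbound
  have hsub_ne_top : (Q - Q ⊓ ENNReal.ofReal k • P) Set.univ ≠ ∞ :=
    ((Measure.sub_le (μ := Q)) Set.univ).trans_lt (measure_lt_top Q _) |>.ne
  have hmul_ne_top : ENNReal.ofReal k * ∫⁻ x, ENNReal.ofReal (f x) ∂P ≠ ∞ :=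
    ENNReal.mul_ne_top ENNReal.ofReal_ne_top (lintegral_ne_top P)
  rw [toReal_lintegral Q, toReal_lintegral P]
  calc (∫⁻ x, ENNReal.ofReal (f x) ∂Q).toReal
      ≤ ((Q - Q ⊓ ENNReal.ofReal k • P) Set.univ
          + ENNReal.ofReal k * ∫⁻ x, ENNReal.ofReal (f x) ∂P).toReal :=
        ENNReal.toReal_mono (ENNReal.add_ne_top.2 ⟨hsub_ne_top, hmul_ne_top⟩) hbound
    _ = _ := by
        rw [ENNReal.toReal_add hsub_ne_top hmul_ne_top, ENNReal.toReal_mul,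
          ENNReal.toReal_ofReal hk]

end TruncationBound

theorem stmt3_general
    {X : ℕ → Type*} [∀ n, MeasurableSpace (X n)]
    (P Q : (n : ℕ) → Measure (X n))
    (hP : ∀ n, IsProbabilityMeasure (P n)) (hQ : ∀ n, IsProbabilityMeasure (Q n))
    (a : ℕ → ℝ) (ha0 : ∀ n, 0 < a n)
    (hcrit : ∀ ε > (0:ℝ), ∃ c > (0:ℝ), ∀ᶠ n in atTop,
      ((Q n - (Q n ⊓ (ENNReal.ofReal (c * (a n)⁻¹) • P n))) Set.univ).toReal < ε)
    (φ : (n : ℕ) → X n → ℝ) (hmeas : ∀ n, Measurable (φ n))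
    (h01 : ∀ n x, 0 ≤ φ n x ∧ φ n x ≤ 1)
    (ho : (fun n => ∫ x, φ n x ∂(P n)) =o[atTop] a) :
    Tendsto (fun n => ∫ x, φ n x ∂(Q n)) atTop (nhds 0) := by
  refine tendsto_order.2 ⟨fun b hb ↦ .of_forall fun n ↦
    hb.trans_le (integral_nonneg fun x ↦ (h01 n x).1), fun ε hε ↦ ?_⟩
  obtain ⟨c, hc, htv⟩ := hcrit (ε / 2) (half_pos hε)
  filter_upwards [htv, ho.def (div_pos hε (mul_pos two_pos hc))] with n htv_n hP_n
  have hk : 0 ≤ c * (a n)⁻¹ := by have := ha0 n; positivity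
  have hP_small : c * (a n)⁻¹ * ∫ x, φ n x ∂(P n) ≤ ε / 2 := by
    rw [Real.norm_eq_abs, Real.norm_eq_abs, abs_of_pos (ha0 n)] at hP_n
    calc c * (a n)⁻¹ * ∫ x, φ n x ∂(P n) ≤ c * (a n)⁻¹ * (ε / (2 * c) * a n) :=
          mul_le_mul_of_nonneg_left ((le_abs_self _).trans hP_n) hk
      _ = ε / 2 := by field_simp [(ha0 n).ne', hc.ne']
  calc ∫ x, φ n x ∂(Q n)
      ≤ ((Q n - Q n ⊓ ENNReal.ofReal (c * (a n)⁻¹) • P n) Set.univ).toReal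
          + c * (a n)⁻¹ * ∫ x, φ n x ∂(P n) :=
        integral_le_measure_sub_inf_add_mul_integral (Q n) (P n) (hmeas n)
          (fun x ↦ (h01 n x).1) (fun x ↦ (h01 n x).2) hk
    _ < ε / 2 + ε / 2 := add_lt_add_of_lt_of_le htv_n hP_small
    _ = ε := add_halves ε

/-- Lemma 3.2 (iv): the truncation (total-variation) criterion implies
`a n`-remote contiguity of `Q n` with respect to `P n`. -/
theorem stmt3
    {X : ℕ → Type*} [∀ n, MeasurableSpace (X n)]
    (P Q : (n : ℕ) → Measure (X n))
    (hP : ∀ n, IsProbabilityMeasure (P n)) (hQ : ∀ n, IsProbabilityMeasure (Q n))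
    (a : ℕ → ℝ) (ha0 : ∀ n, 0 < a n) (haanti : Antitone a)
    (halim : Tendsto a atTop (nhds 0))
    (hcrit : ∀ ε > (0:ℝ), ∃ c > (0:ℝ), ∀ᶠ n in atTop,
      ((Q n - (Q n ⊓ (ENNReal.ofReal (c * (a n)⁻¹) • P n))) Set.univ).toReal < ε)
    (φ : (n : ℕ) → X n → ℝ) (hmeas : ∀ n, Measurable (φ n))
    (h01 : ∀ n x, 0 ≤ φ n x ∧ φ n x ≤ 1)
    (ho : (fun n => ∫ x, φ n x ∂(P n)) =o[atTop] a) :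
    Tendsto (fun n => ∫ x, φ n x ∂(Q n)) atTop (nhds 0) :=
  stmt3_general P Q hP hQ a ha0 hcrit φ hmeas h01 ho
end

section
/- Let (P_n) and (Q_n) be probability measures on (X_n, B_n) and a_n ↓ 0. If there is a constant b > 0 such that liminf_n b·a_n^{-1}·P_n(dQ_n/dP_n > b·a_n^{-1}) = 1, then for every ε > 0 there exists c > 0 such that ‖Q_n − Q_n ∧ c·a_n^{-1} P_n‖ < ε for all large enough n (and consequently Q_n is a_n-remotely contiguous with respect to P_n). -/
open MeasureTheory Filter Asymptotics
open scoped ENNReal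

/-- Auxiliary: mass of the part of `Q` above the truncation level. -/
lemma stmt4_aux {Y : Type*} [MeasurableSpace Y] (P Q : Measure Y)
    [IsProbabilityMeasure P] [IsProbabilityMeasure Q] (t : ℝ≥0∞) :
    ((Q - (Q ⊓ (t • P))) Set.univ).toReal
      ≤ 1 - (t * P {x | t < Q.rnDeriv P x}).toReal := by
  set A : Set Y := {x | t < Q.rnDeriv P x} with hA
  have hAm : MeasurableSet A := measurableSet_lt measurable_const (Measure.measurable_rnDeriv Q P)
  have hR : (t • P).restrict A ≤ Q := by
    refine Measure.le_iff.2 fun s hs => ?_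
    rw [Measure.restrict_apply hs]
    calc (t • P) (s ∩ A) = t * P (s ∩ A) := rfl
      _ = ∫⁻ x in s ∩ A, t ∂P := (setLIntegral_const _ _).symm
      _ ≤ ∫⁻ x in s ∩ A, Q.rnDeriv P x ∂P :=
          setLIntegral_mono (Measure.measurable_rnDeriv Q P)
            (fun x hx => le_of_lt hx.2)
      _ = (P.withDensity (Q.rnDeriv P)) (s ∩ A) := (withDensity_apply _ (hs.inter hAm)).symm
      _ ≤ (P.withDensity (Q.rnDeriv P)) s := measure_mono Set.inter_subset_left
      _ ≤ Q s := Measure.withDensity_rnDeriv_le Q P s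
  have hRle : (t • P).restrict A ≤ Q ⊓ (t • P) := le_inf hR (Measure.restrict_le_self)
  have hinf_le : Q ⊓ (t • P) ≤ Q := inf_le_left
  haveI : IsFiniteMeasure (Q ⊓ (t • P)) := isFiniteMeasure_of_le Q hinf_le
  have hsub : (Q - (Q ⊓ (t • P))) Set.univ = Q Set.univ - (Q ⊓ (t • P)) Set.univ :=
    Measure.sub_apply MeasurableSet.univ hinf_le
  have htPA : t * P A ≤ (Q ⊓ (t • P)) Set.univ := by
    have := hRle Set.univ
    rwa [Measure.restrict_apply MeasurableSet.univ, Set.univ_inter] at this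
  have hfin : (Q ⊓ (t • P)) Set.univ ≠ ⊤ := measure_ne_top _ _
  rw [hsub, measure_univ, ENNReal.toReal_sub_of_le ((hinf_le Set.univ).trans_eq measure_univ) (by simp)]
  have h1 : (t * P A).toReal ≤ ((Q ⊓ (t • P)) Set.univ).toReal :=
    ENNReal.toReal_mono hfin htPA
  simp only [ENNReal.toReal_one]
  linarith

/-- Lemma 3.2 (iii): the liminf criterion implies the truncation criterion
and consequently `a n`-remote contiguity of `Q n` with respect to `P n`. -/
theorem stmt4
    {X : ℕ → Type*} [∀ n, MeasurableSpace (X n)]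
    (P Q : (n : ℕ) → Measure (X n))
    (hP : ∀ n, IsProbabilityMeasure (P n)) (hQ : ∀ n, IsProbabilityMeasure (Q n))
    (a : ℕ → ℝ) (ha0 : ∀ n, 0 < a n) (haanti : Antitone a)
    (halim : Tendsto a atTop (nhds 0))
    (b : ℝ) (hb : 0 < b)
    (hliminf : Filter.liminf (fun n =>
      b * (a n)⁻¹ * ((P n) {x | ENNReal.ofReal (b * (a n)⁻¹)
        < ((Q n).rnDeriv (P n)) x}).toReal) atTop = 1) :
    (∀ ε > (0:ℝ), ∃ c > (0:ℝ), ∀ᶠ n in atTop,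
      ((Q n - (Q n ⊓ (ENNReal.ofReal (c * (a n)⁻¹) • P n))) Set.univ).toReal < ε) ∧
    (∀ φ : (n : ℕ) → X n → ℝ, (∀ n, Measurable (φ n)) →
      (∀ n x, 0 ≤ φ n x ∧ φ n x ≤ 1) →
      (fun n => ∫ x, φ n x ∂(P n)) =o[atTop] a →
      Tendsto (fun n => ∫ x, φ n x ∂(Q n)) atTop (nhds 0)) := by
  haveI := hP; haveI := hQ
  have hba : ∀ n, 0 ≤ b * (a n)⁻¹ := fun n =>
    le_of_lt (mul_pos hb (inv_pos.2 (ha0 n)))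
  -- Part 1
  have key : ∀ ε > (0:ℝ), ∃ c > (0:ℝ), ∀ᶠ n in atTop,
      ((Q n - (Q n ⊓ (ENNReal.ofReal (c * (a n)⁻¹) • P n))) Set.univ).toReal < ε := by
    intro ε hε
    refine ⟨b, hb, ?_⟩
    have hev : ∀ᶠ n in atTop, 1 - ε <
        b * (a n)⁻¹ * ((P n) {x | ENNReal.ofReal (b * (a n)⁻¹)
          < ((Q n).rnDeriv (P n)) x}).toReal := by
      exact eventually_lt_of_lt_liminf (by rw [hliminf]; linarith)
        (isBoundedUnder_of ⟨0, fun n =>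
          mul_nonneg (hba n) ENNReal.toReal_nonneg⟩)
    filter_upwards [hev] with n hn
    have hle := stmt4_aux (P n) (Q n) (ENNReal.ofReal (b * (a n)⁻¹))
    have heq : (ENNReal.ofReal (b * (a n)⁻¹) *
        (P n) {x | ENNReal.ofReal (b * (a n)⁻¹) < ((Q n).rnDeriv (P n)) x}).toReal
        = b * (a n)⁻¹ * ((P n) {x | ENNReal.ofReal (b * (a n)⁻¹)
          < ((Q n).rnDeriv (P n)) x}).toReal := by
      rw [ENNReal.toReal_mul, ENNReal.toReal_ofReal (hba n)]
    rw [heq] at hle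
    linarith
  refine ⟨key, ?_⟩
  -- Part 2
  intro φ hφm hφ01 ho
  rw [NormedAddCommGroup.tendsto_nhds_zero]
  intro ε hε
  obtain ⟨c, hc, hev1⟩ := key (ε / 2) (by linarith)
  have hev2 : ∀ᶠ n in atTop, ∫ x, φ n x ∂(P n) ≤ ε / (4 * c) * a n := by
    filter_upwards [ho.bound (show (0:ℝ) < ε / (4 * c) by positivity)] with n hn
    calc ∫ x, φ n x ∂(P n) ≤ |∫ x, φ n x ∂(P n)| := le_abs_self _
      _ ≤ ε / (4 * c) * |a n| := hn
      _ = ε / (4 * c) * a n := by rw [abs_of_pos (ha0 n)]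
  filter_upwards [hev1, hev2] with n h1 h2
  set t : ℝ≥0∞ := ENNReal.ofReal (c * (a n)⁻¹) with ht
  set R := Q n ⊓ (t • P n) with hR
  have hinf_le : R ≤ Q n := inf_le_left
  haveI : IsFiniteMeasure R := isFiniteMeasure_of_le (Q n) hinf_le
  have hQeq : Q n = (Q n - R) + R := (Measure.sub_add_cancel_of_le hinf_le).symm
  have hφnn : ∀ x, 0 ≤ φ n x := fun x => (hφ01 n x).1
  have hPint : ∫ x, φ n x ∂(P n)
      = (∫⁻ x, ENNReal.ofReal (φ n x) ∂(P n)).toReal :=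
    integral_eq_lintegral_of_nonneg_ae (Filter.Eventually.of_forall hφnn)
      (hφm n).aestronglyMeasurable
  have hQint : ∫ x, φ n x ∂(Q n)
      = (∫⁻ x, ENNReal.ofReal (φ n x) ∂(Q n)).toReal :=
    integral_eq_lintegral_of_nonneg_ae (Filter.Eventually.of_forall hφnn)
      (hφm n).aestronglyMeasurable
  have hLP_le : ∫⁻ x, ENNReal.ofReal (φ n x) ∂(P n) ≤ 1 := by
    calc ∫⁻ x, ENNReal.ofReal (φ n x) ∂(P n) ≤ ∫⁻ _, 1 ∂(P n) :=
          lintegral_mono fun x => ENNReal.ofReal_le_one.2 (hφ01 n x).2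
      _ = 1 := by simp
  have hsplit : ∫⁻ x, ENNReal.ofReal (φ n x) ∂(Q n)
      ≤ (Q n - R) Set.univ + t * ∫⁻ x, ENNReal.ofReal (φ n x) ∂(P n) := by
    conv_lhs => rw [hQeq]
    rw [lintegral_add_measure]
    gcongr
    · calc ∫⁻ x, ENNReal.ofReal (φ n x) ∂(Q n - R) ≤ ∫⁻ _, 1 ∂(Q n - R) :=
          lintegral_mono fun x => ENNReal.ofReal_le_one.2 (hφ01 n x).2
        _ = (Q n - R) Set.univ := by simp
    · calc ∫⁻ x, ENNReal.ofReal (φ n x) ∂(R)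
          ≤ ∫⁻ x, ENNReal.ofReal (φ n x) ∂(t • P n) :=
            lintegral_mono' inf_le_right le_rfl
        _ = t * ∫⁻ x, ENNReal.ofReal (φ n x) ∂(P n) := lintegral_smul_measure _ _
  have hfin1 : (Q n - R) Set.univ ≠ ⊤ :=
    (lt_of_le_of_lt (Measure.sub_le Set.univ) (measure_lt_top _ _)).ne
  have hfin2 : t * ∫⁻ x, ENNReal.ofReal (φ n x) ∂(P n) ≠ ⊤ :=
    (lt_of_le_of_lt (mul_le_mul_right hLP_le t)
      (by rw [mul_one]; exact ENNReal.ofReal_lt_top)).ne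
  have hbound : ∫ x, φ n x ∂(Q n)
      ≤ ((Q n - R) Set.univ).toReal + c * (a n)⁻¹ * ∫ x, φ n x ∂(P n) := by
    rw [hQint]
    calc (∫⁻ x, ENNReal.ofReal (φ n x) ∂(Q n)).toReal
        ≤ ((Q n - R) Set.univ + t * ∫⁻ x, ENNReal.ofReal (φ n x) ∂(P n)).toReal :=
          ENNReal.toReal_mono (by
            exact ENNReal.add_ne_top.2 ⟨hfin1, hfin2⟩) hsplit
      _ = ((Q n - R) Set.univ).toReal + c * (a n)⁻¹ * ∫ x, φ n x ∂(P n) := by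
          rw [ENNReal.toReal_add hfin1 hfin2, ENNReal.toReal_mul,
            ENNReal.toReal_ofReal (le_of_lt (mul_pos hc (inv_pos.2 (ha0 n)))), hPint]
  have hQnn : 0 ≤ ∫ x, φ n x ∂(Q n) := integral_nonneg hφnn
  rw [Real.norm_eq_abs, abs_of_nonneg hQnn]
  have hPnn : 0 ≤ ∫ x, φ n x ∂(P n) := integral_nonneg hφnn
  have h3 : c * (a n)⁻¹ * ∫ x, φ n x ∂(P n) ≤ c * (a n)⁻¹ * (ε / (4 * c) * a n) := by
    exact mul_le_mul_of_nonneg_left h2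
      (le_of_lt (mul_pos hc (inv_pos.2 (ha0 n))))
  have h4 : c * (a n)⁻¹ * (ε / (4 * c) * a n) = ε / 4 := by
    have hc0 : c ≠ 0 := hc.ne'
    have ha0' : a n ≠ 0 := (ha0 n).ne'
    field_simp
  linarith
end

section
/- Assume X^n ∼ P_{θ_0,n} for all n, fix a prior Π on (Θ, G), and let B, V ∈ G with Π(B) > 0 and a_n ↓ 0. Suppose (i) there exist measurable tests φ_n : X_n → [0,1] with ∫_B P_{θ,n}[φ_n] dΠ(θ) + ∫_V P_{θ',n}[1 − φ_n] dΠ(θ') = o(a_n), and (ii) P_{θ_0,n} is a_n-remotely contiguous with respect to the local prior predictive distributions P_n^{Π|B}. Then the posterior mass of V vanishes: Π(V|X^n) → 0 in P_{θ_0,n}-probability. -/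
open MeasureTheory Filter Asymptotics


-- bounded nonneg real integral = toReal of lintegral
lemma aux_int_eq {Y : Type*} [MeasurableSpace Y] (Q : Measure Y) {f : Y → ℝ}
    (hf : Measurable f) (h0 : ∀ x, 0 ≤ f x) :
    ∫ x, f x ∂Q = (∫⁻ x, ENNReal.ofReal (f x) ∂Q).toReal := by
  rw [integral_eq_lintegral_of_nonneg_ae (Filter.Eventually.of_forall h0)
    hf.aestronglyMeasurable]

lemma aux_lint_le {Y : Type*} [MeasurableSpace Y] (Q : Measure Y) {f : Y → ℝ}
    (h1 : ∀ x, f x ≤ 1) : ∫⁻ x, ENNReal.ofReal (f x) ∂Q ≤ Q Set.univ := by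
  calc ∫⁻ x, ENNReal.ofReal (f x) ∂Q ≤ ∫⁻ _, 1 ∂Q := by
        apply lintegral_mono; intro x
        calc ENNReal.ofReal (f x) ≤ ENNReal.ofReal 1 := ENNReal.ofReal_le_ofReal (h1 x)
          _ = 1 := by simp
    _ = Q Set.univ := by simp

open ENNReal

/-- Theorem 4.3 (consistency): Bayesian tests of power `a n` together with
remote contiguity with respect to the local prior predictive distribution over
`B` yield vanishing posterior mass of `V` in `P (θ0)`-probability. -/
theorem stmt10 {Θ : Type*} [MeasurableSpace Θ] {X : ℕ → Type*} [∀ n, MeasurableSpace (X n)]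
    (Pri : Measure Θ) [IsProbabilityMeasure Pri]
    (P : (n : ℕ) → Θ → Measure (X n)) (hP : ∀ n θ, IsProbabilityMeasure (P n θ))
    (hPmeas : ∀ n, Measurable (P n))
    (θ0 : Θ)
    (post : (n : ℕ) → Set Θ → X n → ℝ)
    (hpostmeas : ∀ n W, MeasurableSet W → Measurable (post n W))
    (hpost01 : ∀ n W x, 0 ≤ post n W x ∧ post n W x ≤ 1)
    (hBayes : ∀ n A, MeasurableSet A → ∀ W, MeasurableSet W →
      ∫ x in A, post n W x ∂(Pri.bind (P n)) = ∫ θ in W, (P n θ A).toReal ∂Pri)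
    (B V : Set Θ) (hB : MeasurableSet B) (hV : MeasurableSet V)
    (hPriB : 0 < (Pri B).toReal)
    (a : ℕ → ℝ) (ha0 : ∀ n, 0 < a n) (haanti : Antitone a)
    (halim : Tendsto a atTop (nhds 0))
    (φ : (n : ℕ) → X n → ℝ) (hφmeas : ∀ n, Measurable (φ n))
    (hφ01 : ∀ n x, 0 ≤ φ n x ∧ φ n x ≤ 1)
    (htest : (fun n => ∫ θ in B, (∫ x, φ n x ∂(P n θ)) ∂Pri
        + ∫ θ in V, (∫ x, (1 - φ n x) ∂(P n θ)) ∂Pri) =o[atTop] a)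
    (hrc : ∀ ψ : (n : ℕ) → X n → ℝ, (∀ n, Measurable (ψ n)) →
      (∀ n x, 0 ≤ ψ n x ∧ ψ n x ≤ 1) →
      (fun n => ∫ x, ψ n x ∂((Pri B)⁻¹ • ((Pri.restrict B).bind (P n)))) =o[atTop] a →
      Tendsto (fun n => ∫ x, ψ n x ∂(P n θ0)) atTop (nhds 0)) :
    ∀ ε > (0:ℝ), Tendsto (fun n => ((P n θ0) {x | ε < post n V x}).toReal)
      atTop (nhds 0) := by
  -- notation
  set g : (n : ℕ) → X n → ℝ≥0∞ := fun n x => ENNReal.ofReal (post n V x) with hg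
  have hgmeas : ∀ n, Measurable (g n) := fun n =>
    (hpostmeas n V hV).ennreal_ofReal
  have hfmeas : ∀ n, Measurable (fun x => ENNReal.ofReal (φ n x)) := fun n =>
    (hφmeas n).ennreal_ofReal
  have hhmeas : ∀ n, Measurable (fun x => ENNReal.ofReal (1 - φ n x)) := fun n =>
    ((measurable_const.sub (hφmeas n))).ennreal_ofReal
  have hbindprob : ∀ n, IsProbabilityMeasure (Pri.bind (P n)) := by
    intro n
    constructor
    rw [Measure.bind_apply MeasurableSet.univ (hPmeas n).aemeasurable]
    have : ∀ θ, P n θ Set.univ = 1 := fun θ => (hP n θ).measure_univ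
    simp [this]
  -- Key: withDensity identity
  have key : ∀ n, (Pri.bind (P n)).withDensity (g n) = (Pri.restrict V).bind (P n) := by
    intro n
    haveI := hbindprob n
    ext A hA
    rw [withDensity_apply _ hA, Measure.bind_apply hA (hPmeas n).aemeasurable]
    have hint : Integrable (post n V) ((Pri.bind (P n)).restrict A) := by
      refine Integrable.mono' (integrable_const 1)
        (hpostmeas n V hV).aestronglyMeasurable ?_
      · refine Filter.Eventually.of_forall fun x => ?_
        rw [Real.norm_eq_abs, abs_of_nonneg (hpost01 n V x).1]
        exact (hpost01 n V x).2
    have h1 : ∫⁻ x in A, g n x ∂(Pri.bind (P n))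
        = ENNReal.ofReal (∫ x in A, post n V x ∂(Pri.bind (P n))) := by
      rw [ofReal_integral_eq_lintegral_ofReal hint
        (Filter.Eventually.of_forall fun x => (hpost01 n V x).1)]
    rw [h1, hBayes n A hA V hV]
    have hint2 : Integrable (fun θ => (P n θ A).toReal) (Pri.restrict V) := by
      refine Integrable.mono' (integrable_const 1)
        (((Measure.measurable_coe hA).comp (hPmeas n)).ennreal_toReal).aestronglyMeasurable ?_
      refine Filter.Eventually.of_forall fun θ => ?_
      rw [Real.norm_eq_abs, abs_of_nonneg ENNReal.toReal_nonneg]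
      haveI := hP n θ
      exact ENNReal.toReal_le_of_le_ofReal zero_le_one (by simpa using prob_le_one)
    rw [ofReal_integral_eq_lintegral_ofReal hint2
      (Filter.Eventually.of_forall fun θ => ENNReal.toReal_nonneg)]
    refine lintegral_congr fun θ => ?_
    haveI := hP n θ
    exact ENNReal.ofReal_toReal (measure_ne_top _ _)
  -- local predictive measure over B
  set ρ : (n : ℕ) → Measure (X n) := fun n => (Pri.restrict B).bind (P n) with hρ
  have hρle : ∀ n, ρ n ≤ Pri.bind (P n) := by
    intro n
    refine Measure.le_iff.2 fun s hs => ?_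
    rw [Measure.bind_apply hs (hPmeas n).aemeasurable, Measure.bind_apply hs (hPmeas n).aemeasurable]
    exact lintegral_mono' Measure.restrict_le_self le_rfl
  have hPθ1 : ∀ n θ, (P n θ) Set.univ = 1 := fun n θ => (hP n θ).measure_univ
  -- core ENNReal inequality
  have hcore : ∀ n, ∫⁻ x, g n x ∂(ρ n)
      ≤ ∫⁻ x, ENNReal.ofReal (φ n x) ∂(ρ n)
        + ∫⁻ x, ENNReal.ofReal (1 - φ n x) ∂((Pri.restrict V).bind (P n)) := by
    intro n
    have hptwise : ∀ x, g n x ≤ ENNReal.ofReal (φ n x)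
        + ENNReal.ofReal (1 - φ n x) * g n x := by
      intro x
      obtain ⟨p0, p1⟩ := hpost01 n V x; obtain ⟨q0, q1⟩ := hφ01 n x
      have hre : post n V x ≤ φ n x + (1 - φ n x) * post n V x := by nlinarith
      calc g n x ≤ ENNReal.ofReal (φ n x + (1 - φ n x) * post n V x) :=
            ENNReal.ofReal_le_ofReal hre
        _ = ENNReal.ofReal (φ n x) + ENNReal.ofReal (1 - φ n x) * g n x := by
            rw [ENNReal.ofReal_add q0 (by nlinarith), ENNReal.ofReal_mul (by linarith)]
    calc ∫⁻ x, g n x ∂(ρ n)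
        ≤ ∫⁻ x, ENNReal.ofReal (φ n x) + ENNReal.ofReal (1 - φ n x) * g n x ∂(ρ n) :=
          lintegral_mono hptwise
      _ = ∫⁻ x, ENNReal.ofReal (φ n x) ∂(ρ n)
          + ∫⁻ x, ENNReal.ofReal (1 - φ n x) * g n x ∂(ρ n) :=
          lintegral_add_left (hfmeas n) _
      _ ≤ ∫⁻ x, ENNReal.ofReal (φ n x) ∂(ρ n)
          + ∫⁻ x, ENNReal.ofReal (1 - φ n x) * g n x ∂(Pri.bind (P n)) :=
          add_le_add le_rfl (lintegral_mono' (hρle n) le_rfl)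
      _ = _ := by
          congr 1
          rw [← key n, lintegral_withDensity_eq_lintegral_mul _ (hgmeas n) (hhmeas n)]
          exact lintegral_congr fun x => mul_comm _ _
  -- identify the two ENNReal test terms with the real ones
  have hinnermeasf : ∀ n, Measurable fun θ => ∫⁻ x, ENNReal.ofReal (φ n x) ∂(P n θ) :=
    fun n => (Measure.measurable_lintegral (hfmeas n)).comp (hPmeas n)
  have hinnermeash : ∀ n, Measurable fun θ => ∫⁻ x, ENNReal.ofReal (1 - φ n x) ∂(P n θ) :=
    fun n => (Measure.measurable_lintegral (hhmeas n)).comp (hPmeas n)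
  have hinnerlef : ∀ n θ, ∫⁻ x, ENNReal.ofReal (φ n x) ∂(P n θ) ≤ 1 := by
    intro n θ
    simpa [hPθ1 n θ] using aux_lint_le (P n θ) (fun x => (hφ01 n x).2)
  have hinnerleh : ∀ n θ, ∫⁻ x, ENNReal.ofReal (1 - φ n x) ∂(P n θ) ≤ 1 := by
    intro n θ
    have := aux_lint_le (P n θ) (f := fun x => 1 - φ n x)
      (fun x => by show 1 - φ n x ≤ 1; linarith [(hφ01 n x).1])
    simpa [hPθ1 n θ] using this
  have hBeq : ∀ n, ∫ θ in B, (∫ x, φ n x ∂(P n θ)) ∂Pri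
      = (∫⁻ x, ENNReal.ofReal (φ n x) ∂(ρ n)).toReal := by
    intro n
    rw [Measure.lintegral_bind (hPmeas n).aemeasurable (hfmeas n).aemeasurable]
    rw [← integral_toReal ((hinnermeasf n).aemeasurable.restrict)
      (Filter.Eventually.of_forall fun θ => lt_of_le_of_lt (hinnerlef n θ) one_lt_top)]
    refine setIntegral_congr_fun hB fun θ _ => ?_
    exact aux_int_eq (P n θ) (hφmeas n) (fun x => (hφ01 n x).1)
  have hVeq : ∀ n, ∫ θ in V, (∫ x, (1 - φ n x) ∂(P n θ)) ∂Pri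
      = (∫⁻ x, ENNReal.ofReal (1 - φ n x) ∂((Pri.restrict V).bind (P n))).toReal := by
    intro n
    rw [Measure.lintegral_bind (hPmeas n).aemeasurable (hhmeas n).aemeasurable]
    rw [← integral_toReal ((hinnermeash n).aemeasurable.restrict)
      (Filter.Eventually.of_forall fun θ => lt_of_le_of_lt (hinnerleh n θ) one_lt_top)]
    refine setIntegral_congr_fun hV fun θ _ => ?_
    exact aux_int_eq (P n θ) (measurable_const.sub (hφmeas n))
      (fun x => by linarith [(hφ01 n x).2])
  -- finiteness of the two terms
  have hρuniv : ∀ n, ρ n Set.univ ≤ 1 := by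
    intro n
    rw [Measure.bind_apply MeasurableSet.univ (hPmeas n).aemeasurable]
    calc ∫⁻ θ, P n θ Set.univ ∂(Pri.restrict B) = Pri.restrict B Set.univ := by
          simp [hPθ1 n]
      _ ≤ Pri Set.univ := by rw [Measure.restrict_apply_univ]; exact measure_mono (Set.subset_univ _)
      _ = 1 := measure_univ
  have hνuniv : ∀ n, ((Pri.restrict V).bind (P n)) Set.univ ≤ 1 := by
    intro n
    rw [Measure.bind_apply MeasurableSet.univ (hPmeas n).aemeasurable]
    calc ∫⁻ θ, P n θ Set.univ ∂(Pri.restrict V) = Pri.restrict V Set.univ := by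
          simp [hPθ1 n]
      _ ≤ Pri Set.univ := by rw [Measure.restrict_apply_univ]; exact measure_mono (Set.subset_univ _)
      _ = 1 := measure_univ
  have hfinB : ∀ n, ∫⁻ x, ENNReal.ofReal (φ n x) ∂(ρ n) ≠ ∞ := fun n =>
    ((aux_lint_le (ρ n) (fun x => (hφ01 n x).2)).trans (hρuniv n)).trans_lt one_lt_top |>.ne
  have hfinV : ∀ n, ∫⁻ x, ENNReal.ofReal (1 - φ n x) ∂((Pri.restrict V).bind (P n)) ≠ ∞ :=
    fun n => ((aux_lint_le _ (f := fun x => 1 - φ n x)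
      (fun x => by show 1 - φ n x ≤ 1; linarith [(hφ01 n x).1])).trans (hνuniv n)).trans_lt one_lt_top |>.ne
  -- little-o of the B-predictive posterior mass
  set F : ℕ → ℝ := fun n => ∫ x, post n V x ∂((Pri B)⁻¹ • ρ n) with hF
  have hFnonneg : ∀ n, 0 ≤ F n := fun n =>
    integral_nonneg fun x => (hpost01 n V x).1
  have hFle : ∀ n, F n ≤ (Pri B).toReal⁻¹
      * (∫ θ in B, (∫ x, φ n x ∂(P n θ)) ∂Pri
        + ∫ θ in V, (∫ x, (1 - φ n x) ∂(P n θ)) ∂Pri) := by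
    intro n
    rw [hF]
    simp only [integral_smul_measure]
    rw [ENNReal.toReal_inv, smul_eq_mul]
    have h1 : ∫ x, post n V x ∂(ρ n) = (∫⁻ x, g n x ∂(ρ n)).toReal :=
      aux_int_eq (ρ n) (hpostmeas n V hV) (fun x => (hpost01 n V x).1)
    rw [h1, hBeq n, hVeq n, ← ENNReal.toReal_add (hfinB n) (hfinV n)]
    refine mul_le_mul_of_nonneg_left ?_ (by positivity)
    exact ENNReal.toReal_mono (by
      rw [ENNReal.add_ne_top]; exact ⟨hfinB n, hfinV n⟩) (hcore n)
  have hO : F =o[atTop] a := by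
    refine IsBigO.trans_isLittleO ?_ htest
    refine isBigO_of_le' (c := (Pri B).toReal⁻¹) atTop fun n => ?_
    rw [Real.norm_eq_abs, abs_of_nonneg (hFnonneg n)]
    exact (hFle n).trans (mul_le_mul_of_nonneg_left (le_abs_self _) (by positivity))
  -- remote contiguity
  have hconc : Tendsto (fun n => ∫ x, post n V x ∂(P n θ0)) atTop (nhds 0) :=
    hrc (fun n => post n V) (fun n => hpostmeas n V hV) (fun n x => hpost01 n V x) hO
  -- Markov + squeeze
  intro ε hε
  have hbound : ∀ n, ((P n θ0) {x | ε < post n V x}).toReal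
      ≤ (∫ x, post n V x ∂(P n θ0)) / ε := by
    intro n
    haveI := hP n θ0
    have hsub : {x | ε < post n V x} ⊆ {x | ENNReal.ofReal ε ≤ g n x} := by
      intro x hx
      exact ENNReal.ofReal_le_ofReal (le_of_lt hx)
    have hmarkov : ENNReal.ofReal ε * (P n θ0) {x | ENNReal.ofReal ε ≤ g n x}
        ≤ ∫⁻ x, g n x ∂(P n θ0) :=
      mul_meas_ge_le_lintegral₀ (hgmeas n).aemeasurable _
    have hεne : ENNReal.ofReal ε ≠ 0 := by
      simp [ENNReal.ofReal_eq_zero, not_le, hε]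
    have hdiv : (P n θ0) {x | ε < post n V x}
        ≤ (∫⁻ x, g n x ∂(P n θ0)) / ENNReal.ofReal ε := by
      refine le_trans (measure_mono hsub) ?_
      rw [ENNReal.le_div_iff_mul_le (Or.inl hεne) (Or.inl ENNReal.ofReal_ne_top)]
      rw [mul_comm]; exact hmarkov
    have hfin : ∫⁻ x, g n x ∂(P n θ0) ≠ ∞ :=
      ((aux_lint_le _ (fun x => (hpost01 n V x).2)).trans_lt
        (by simp [hPθ1 n θ0])).ne
    calc ((P n θ0) {x | ε < post n V x}).toReal
        ≤ ((∫⁻ x, g n x ∂(P n θ0)) / ENNReal.ofReal ε).toReal := by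
          refine ENNReal.toReal_mono ?_ hdiv
          exact (ENNReal.div_lt_top hfin hεne).ne
      _ = (∫ x, post n V x ∂(P n θ0)) / ε := by
          rw [ENNReal.toReal_div, ENNReal.toReal_ofReal hε.le,
            aux_int_eq (P n θ0) (hpostmeas n V hV) (fun x => (hpost01 n V x).1)]
  refine squeeze_zero (fun n => ENNReal.toReal_nonneg) hbound ?_
  simpa using hconc.div_const ε
end

section
/- Assume X^n ∼ P_{θ_0,n}, fix priors Π_n on (Θ, G), subsets B_n, V_n ∈ G with Π_n(B_n) > 0, and sequences a_n, b_n ↓ 0 with a_n = o(b_n). Suppose: (i) there exist measurable tests φ_n with ∫_{B_n} P_{θ,n}[φ_n] dΠ_n(θ) + ∫_{V_n} P_{θ,n}[1−φ_n] dΠ_n(θ) = o(a_n); (ii) Π_n(B_n) ≥ b_n; (iii) P_{θ_0,n} ◁ b_n a_n^{-1} P_n^{Π_n|B_n}. Then Π_n(V_n | X^n) → 0 in P_{θ_0,n}-probability. -/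
open MeasureTheory Filter Asymptotics
open scoped ENNReal

lemma lint_le_one {Xn : Type*} [MeasurableSpace Xn] (μ : Measure Xn)
    (hμ : IsProbabilityMeasure μ) (f : Xn → ℝ) (hf : ∀ x, f x ≤ 1) :
    ∫⁻ x, ENNReal.ofReal (f x) ∂μ ≤ 1 := by
  calc ∫⁻ x, ENNReal.ofReal (f x) ∂μ ≤ ∫⁻ _, 1 ∂μ :=
        lintegral_mono fun x => (ENNReal.ofReal_le_ofReal (hf x)).trans (by simp)
    _ = 1 := by simp [hμ.measure_univ]

lemma int_eq_lint {Xn : Type*} [MeasurableSpace Xn] (μ : Measure Xn)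
    (f : Xn → ℝ) (hf : Measurable f) (h0 : ∀ x, 0 ≤ f x) :
    ∫ x, f x ∂μ = (∫⁻ x, ENNReal.ofReal (f x) ∂μ).toReal :=
  integral_eq_lintegral_of_nonneg_ae (ae_of_all _ h0) hf.aestronglyMeasurable

lemma bayes_withDensity {Θ : Type*} [MeasurableSpace Θ] {Xn : Type*} [MeasurableSpace Xn]
    (Pri : Measure Θ) (hPri : IsProbabilityMeasure Pri)
    (P : Θ → Measure Xn) (hP : ∀ θ, IsProbabilityMeasure (P θ)) (hPmeas : Measurable P)
    (post : Xn → ℝ) (hpm : Measurable post) (hp01 : ∀ x, 0 ≤ post x ∧ post x ≤ 1)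
    (W : Set Θ) (hW : MeasurableSet W)
    (hBayes : ∀ A, MeasurableSet A →
      ∫ x in A, post x ∂(Pri.bind P) = ∫ θ in W, (P θ A).toReal ∂Pri) :
    (Pri.bind P).withDensity (fun x => ENNReal.ofReal (post x))
      = (Pri.restrict W).bind P := by
  have hbindprob : IsProbabilityMeasure (Pri.bind P) := by
    constructor
    rw [Measure.bind_apply MeasurableSet.univ hPmeas.aemeasurable,
      lintegral_congr fun θ => (hP θ).measure_univ]
    simp [hPri.measure_univ]
  ext A hA
  rw [withDensity_apply _ hA, Measure.bind_apply hA hPmeas.aemeasurable]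
  have hL : ∫⁻ x in A, ENNReal.ofReal (post x) ∂(Pri.bind P) ≠ ⊤ := by
    have h1 : ∫⁻ x in A, ENNReal.ofReal (post x) ∂(Pri.bind P)
        ≤ ∫⁻ _ in A, 1 ∂(Pri.bind P) :=
      lintegral_mono fun x => (ENNReal.ofReal_le_ofReal (hp01 x).2).trans (by simp)
    simp only [setLIntegral_one] at h1
    exact ne_top_of_le_ne_top (measure_ne_top _ _) h1
  have hR : ∫⁻ θ, P θ A ∂(Pri.restrict W) ≠ ⊤ := by
    have h1 : ∫⁻ θ, P θ A ∂(Pri.restrict W) ≤ ∫⁻ _, 1 ∂(Pri.restrict W) :=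
      lintegral_mono fun θ =>
        le_trans (measure_mono (Set.subset_univ _)) (le_of_eq (hP θ).measure_univ)
    simp only [lintegral_const, one_mul, Measure.restrict_apply_univ] at h1
    exact ne_top_of_le_ne_top (measure_ne_top _ _) h1
  refine (ENNReal.toReal_eq_toReal_iff' hL hR).1 ?_
  calc (∫⁻ x in A, ENNReal.ofReal (post x) ∂(Pri.bind P)).toReal
      = ∫ x in A, post x ∂(Pri.bind P) :=
        (int_eq_lint _ _ hpm fun x => (hp01 x).1).symm
    _ = ∫ θ in W, (P θ A).toReal ∂Pri := hBayes A hA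
    _ = (∫⁻ θ, P θ A ∂(Pri.restrict W)).toReal := by
        refine integral_toReal ?_ (ae_of_all _ fun θ => measure_lt_top _ _)
        exact ((Measure.measurable_coe hA).comp hPmeas).aemeasurable

/-- Theorem 4.5 (rates): tests of power `a n`, prior mass lower bound `b n`
and `b n * (a n)⁻¹`-remote contiguity imply vanishing posterior mass of `V n`
in `P (θ0)`-probability. -/
theorem stmt11 {Θ : Type*} [MeasurableSpace Θ] {X : ℕ → Type*} [∀ n, MeasurableSpace (X n)]
    (Pri : ℕ → Measure Θ) (hPri : ∀ n, IsProbabilityMeasure (Pri n))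
    (P : (n : ℕ) → Θ → Measure (X n)) (hP : ∀ n θ, IsProbabilityMeasure (P n θ))
    (hPmeas : ∀ n, Measurable (P n))
    (θ0 : Θ)
    (post : (n : ℕ) → Set Θ → X n → ℝ)
    (hpostmeas : ∀ n W, MeasurableSet W → Measurable (post n W))
    (hpost01 : ∀ n W x, 0 ≤ post n W x ∧ post n W x ≤ 1)
    (hBayes : ∀ n A, MeasurableSet A → ∀ W, MeasurableSet W →
      ∫ x in A, post n W x ∂((Pri n).bind (P n)) = ∫ θ in W, (P n θ A).toReal ∂(Pri n))
    (B V : ℕ → Set Θ) (hB : ∀ n, MeasurableSet (B n)) (hV : ∀ n, MeasurableSet (V n))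
    (a b : ℕ → ℝ) (ha0 : ∀ n, 0 < a n) (haanti : Antitone a)
    (halim : Tendsto a atTop (nhds 0))
    (hb0 : ∀ n, 0 < b n) (hbanti : Antitone b) (hblim : Tendsto b atTop (nhds 0))
    (hab : a =o[atTop] b)
    (hPriB : ∀ n, b n ≤ (Pri n (B n)).toReal)
    (φ : (n : ℕ) → X n → ℝ) (hφmeas : ∀ n, Measurable (φ n))
    (hφ01 : ∀ n x, 0 ≤ φ n x ∧ φ n x ≤ 1)
    (htest : (fun n => ∫ θ in B n, (∫ x, φ n x ∂(P n θ)) ∂(Pri n)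
        + ∫ θ in V n, (∫ x, (1 - φ n x) ∂(P n θ)) ∂(Pri n)) =o[atTop] a)
    (hrc : ∀ ψ : (n : ℕ) → X n → ℝ, (∀ n, Measurable (ψ n)) →
      (∀ n x, 0 ≤ ψ n x ∧ ψ n x ≤ 1) →
      (fun n => ∫ x, ψ n x ∂((Pri n (B n))⁻¹ • (((Pri n).restrict (B n)).bind (P n))))
        =o[atTop] (fun n => a n / b n) →
      Tendsto (fun n => ∫ x, ψ n x ∂(P n θ0)) atTop (nhds 0)) :
    ∀ ε > (0:ℝ), Tendsto (fun n => ((P n θ0) {x | ε < post n (V n) x}).toReal)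
      atTop (nhds 0) := by
  intro ε hε
  set ψ : (n : ℕ) → X n → ℝ := fun n x => post n (V n) x with hψdef
  have hψm : ∀ n, Measurable (ψ n) := fun n => hpostmeas n (V n) (hV n)
  have hψ01 : ∀ n x, 0 ≤ ψ n x ∧ ψ n x ≤ 1 := fun n x => hpost01 n (V n) x
  -- per-n names
  set t1 : ℕ → ℝ := fun n => ∫ θ in B n, (∫ x, φ n x ∂(P n θ)) ∂(Pri n) with ht1def
  set t2 : ℕ → ℝ := fun n => ∫ θ in V n, (∫ x, (1 - φ n x) ∂(P n θ)) ∂(Pri n) with ht2def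
  set h : ℕ → ℝ := fun n =>
    ∫ x, ψ n x ∂((Pri n (B n))⁻¹ • (((Pri n).restrict (B n)).bind (P n))) with hhdef
  have hhnn : ∀ n, 0 ≤ h n := fun n => integral_nonneg fun x => (hψ01 n x).1
  -- key per-n upper bound
  have hub : ∀ n, h n ≤ (b n)⁻¹ * (t1 n + t2 n) := by
    intro n
    set μ := (Pri n).bind (P n) with hμdef
    set νB := ((Pri n).restrict (B n)).bind (P n) with hνBdef
    set g : X n → ℝ≥0∞ := fun x => ENNReal.ofReal (ψ n x) with hgdef
    have hgm : Measurable g := ENNReal.measurable_ofReal.comp (hψm n)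
    have hφm' : Measurable fun x => ENNReal.ofReal (φ n x) :=
      ENNReal.measurable_ofReal.comp (hφmeas n)
    have h1φm : Measurable fun x : X n => ENNReal.ofReal (1 - φ n x) :=
      ENNReal.measurable_ofReal.comp (measurable_const.sub (hφmeas n))
    set T1 : ℝ≥0∞ := ∫⁻ θ in B n, (∫⁻ x, ENNReal.ofReal (φ n x) ∂(P n θ)) ∂(Pri n) with hT1def
    set T2 : ℝ≥0∞ := ∫⁻ θ in V n, (∫⁻ x, ENNReal.ofReal (1 - φ n x) ∂(P n θ)) ∂(Pri n)
      with hT2def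
    have hinner1 : Measurable fun θ => ∫⁻ x, ENNReal.ofReal (φ n x) ∂(P n θ) :=
      (Measure.measurable_lintegral hφm').comp (hPmeas n)
    have hinner2 : Measurable fun θ => ∫⁻ x, ENNReal.ofReal (1 - φ n x) ∂(P n θ) :=
      (Measure.measurable_lintegral h1φm).comp (hPmeas n)
    have hinner1le : ∀ θ, ∫⁻ x, ENNReal.ofReal (φ n x) ∂(P n θ) ≤ 1 := fun θ =>
      lint_le_one _ (hP n θ) _ fun x => (hφ01 n x).2
    have hinner2le : ∀ θ, ∫⁻ x, ENNReal.ofReal (1 - φ n x) ∂(P n θ) ≤ 1 := fun θ =>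
      lint_le_one _ (hP n θ) _ fun x => by linarith [(hφ01 n x).1]
    have hT1top : T1 ≠ ⊤ := by
      have : T1 ≤ ∫⁻ _ in B n, 1 ∂(Pri n) := lintegral_mono fun θ => hinner1le θ
      simp only [setLIntegral_one] at this
      exact ne_top_of_le_ne_top (measure_ne_top _ _) this
    have hT2top : T2 ≠ ⊤ := by
      have : T2 ≤ ∫⁻ _ in V n, 1 ∂(Pri n) := lintegral_mono fun θ => hinner2le θ
      simp only [setLIntegral_one] at this
      exact ne_top_of_le_ne_top (measure_ne_top _ _) this
    -- the withDensity identity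
    have hWD : μ.withDensity g = ((Pri n).restrict (V n)).bind (P n) :=
      bayes_withDensity (Pri n) (hPri n) (P n) (hP n) (hPmeas n) (post n (V n))
        (hpostmeas n (V n) (hV n)) (hpost01 n (V n)) (V n) (hV n)
        (fun A hA => hBayes n A hA (V n) (hV n))
    have hle : νB ≤ μ := by
      refine Measure.le_iff.2 fun s hs => ?_
      rw [hνBdef, hμdef, Measure.bind_apply hs (hPmeas n).aemeasurable,
        Measure.bind_apply hs (hPmeas n).aemeasurable]
      exact lintegral_mono' Measure.restrict_le_self le_rfl
    -- main lintegral bound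
    have hstep : ∫⁻ x, g x ∂νB ≤ T1 + T2 := by
      have hptwise : ∀ x, g x ≤ ENNReal.ofReal (φ n x)
          + ENNReal.ofReal ((1 - φ n x) * ψ n x) := by
        intro x
        rw [← ENNReal.ofReal_add (hφ01 n x).1
          (mul_nonneg (by linarith [(hφ01 n x).2]) (hψ01 n x).1)]
        refine ENNReal.ofReal_le_ofReal ?_
        nlinarith [(hφ01 n x).1, (hφ01 n x).2, (hψ01 n x).1, (hψ01 n x).2]
      calc ∫⁻ x, g x ∂νB
          ≤ ∫⁻ x, (ENNReal.ofReal (φ n x)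
              + ENNReal.ofReal ((1 - φ n x) * ψ n x)) ∂νB := lintegral_mono hptwise
        _ = (∫⁻ x, ENNReal.ofReal (φ n x) ∂νB)
              + ∫⁻ x, ENNReal.ofReal ((1 - φ n x) * ψ n x) ∂νB :=
            lintegral_add_left hφm' _
        _ ≤ T1 + T2 := by
            gcongr
            · rw [hνBdef, Measure.lintegral_bind (hPmeas n).aemeasurable hφm'.aemeasurable]
            · calc ∫⁻ x, ENNReal.ofReal ((1 - φ n x) * ψ n x) ∂νB
                  ≤ ∫⁻ x, ENNReal.ofReal ((1 - φ n x) * ψ n x) ∂μ :=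
                    lintegral_mono' hle le_rfl
                _ = ∫⁻ x, ENNReal.ofReal (1 - φ n x) ∂(μ.withDensity g) := by
                    rw [lintegral_withDensity_eq_lintegral_mul μ hgm h1φm]
                    refine lintegral_congr fun x => ?_
                    simp only [Pi.mul_apply, hgdef]
                    rw [ENNReal.ofReal_mul (by linarith [(hφ01 n x).2]), mul_comm]
                _ = ∫⁻ x, ENNReal.ofReal (1 - φ n x)
                      ∂(((Pri n).restrict (V n)).bind (P n)) := by rw [hWD]
                _ = T2 := by rw [Measure.lintegral_bind (hPmeas n).aemeasurable h1φm.aemeasurable]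
    -- convert to reals
    have ht1 : t1 n = T1.toReal := by
      have heq : ∀ θ, ∫ x, φ n x ∂(P n θ)
          = (∫⁻ x, ENNReal.ofReal (φ n x) ∂(P n θ)).toReal := fun θ =>
        int_eq_lint _ _ (hφmeas n) fun x => (hφ01 n x).1
      rw [ht1def]
      simp only [heq]
      exact integral_toReal hinner1.aemeasurable
        (ae_of_all _ fun θ => lt_of_le_of_lt (hinner1le θ) ENNReal.one_lt_top)
    have ht2 : t2 n = T2.toReal := by
      have heq : ∀ θ, ∫ x, (1 - φ n x) ∂(P n θ)
          = (∫⁻ x, ENNReal.ofReal (1 - φ n x) ∂(P n θ)).toReal := fun θ =>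
        int_eq_lint _ _ (measurable_const.sub (hφmeas n)) fun x => by linarith [(hφ01 n x).2]
      rw [ht2def]
      simp only [heq]
      exact integral_toReal hinner2.aemeasurable
        (ae_of_all _ fun θ => lt_of_le_of_lt (hinner2le θ) ENNReal.one_lt_top)
    -- assemble
    have hInt : ∫ x, ψ n x ∂νB ≤ t1 n + t2 n := by
      rw [int_eq_lint _ _ (hψm n) fun x => (hψ01 n x).1, ht1, ht2,
        ← ENNReal.toReal_add hT1top hT2top]
      exact ENNReal.toReal_mono (by simp [hT1top, hT2top, ENNReal.add_ne_top]) hstep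
    have hIntnn : 0 ≤ ∫ x, ψ n x ∂νB := integral_nonneg fun x => (hψ01 n x).1
    have hcle : ((Pri n (B n))⁻¹).toReal ≤ (b n)⁻¹ := by
      rw [ENNReal.toReal_inv]
      exact inv_anti₀ (hb0 n) (hPriB n)
    have hcnn : (0:ℝ) ≤ ((Pri n (B n))⁻¹).toReal := ENNReal.toReal_nonneg
    calc h n = ((Pri n (B n))⁻¹).toReal • ∫ x, ψ n x ∂νB := by
          rw [hhdef]; exact integral_smul_measure _ _
      _ = ((Pri n (B n))⁻¹).toReal * ∫ x, ψ n x ∂νB := rfl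
      _ ≤ (b n)⁻¹ * (t1 n + t2 n) :=
          mul_le_mul hcle hInt hIntnn (le_of_lt (inv_pos.2 (hb0 n)))
  -- the little-o statement
  have hlo : h =o[atTop] (fun n => a n / b n) := by
    rw [isLittleO_iff]
    intro c hc
    filter_upwards [htest.def hc] with n hn
    have htnn : 0 ≤ t1 n + t2 n := by
      have h1 : 0 ≤ t1 n := setIntegral_nonneg (hB n) fun θ _ =>
        integral_nonneg fun x => (hφ01 n x).1
      have h2 : 0 ≤ t2 n := setIntegral_nonneg (hV n) fun θ _ =>
        integral_nonneg fun x => by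
          simp only [Pi.zero_apply]; linarith [(hφ01 n x).2]
      linarith
    rw [Real.norm_eq_abs, abs_of_nonneg (hhnn n)]
    rw [Real.norm_eq_abs, Real.norm_eq_abs, abs_of_nonneg htnn,
      abs_of_pos (ha0 n)] at hn
    have hbound : (b n)⁻¹ * (t1 n + t2 n) ≤ c * (a n / (b n)) := by
      rw [div_eq_mul_inv]
      calc (b n)⁻¹ * (t1 n + t2 n) ≤ (b n)⁻¹ * (c * a n) :=
            mul_le_mul_of_nonneg_left hn (le_of_lt (inv_pos.2 (hb0 n)))
        _ = c * (a n * (b n)⁻¹) := by ring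
    calc h n ≤ (b n)⁻¹ * (t1 n + t2 n) := hub n
      _ ≤ c * (a n / b n) := hbound
      _ ≤ c * ‖a n / b n‖ := by
          rw [Real.norm_eq_abs, abs_of_pos (div_pos (ha0 n) (hb0 n))]
  -- apply remote contiguity
  have ht0 : Tendsto (fun n => ∫ x, ψ n x ∂(P n θ0)) atTop (nhds 0) :=
    hrc ψ hψm hψ01 hlo
  -- Markov inequality
  have hmark : ∀ n, ((P n θ0) {x | ε < post n (V n) x}).toReal
      ≤ ε⁻¹ * ∫ x, ψ n x ∂(P n θ0) := by
    intro n
    set S := {x | ε < post n (V n) x} with hSdef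
    have hS : MeasurableSet S := measurableSet_lt measurable_const (hpostmeas n _ (hV n))
    haveI := hP n θ0
    have hint : Integrable (ψ n) (P n θ0) := by
      refine ⟨(hψm n).aestronglyMeasurable, ?_⟩
      exact HasFiniteIntegral.of_bounded (C := 1) (ae_of_all _ fun x => by
        rw [Real.norm_eq_abs, abs_le]
        exact ⟨by linarith [(hψ01 n x).1], (hψ01 n x).2⟩)
    have h1 : ε * ((P n θ0) S).toReal ≤ ∫ x in S, ψ n x ∂(P n θ0) := by
      have hc : ∫ x in S, ε ∂(P n θ0) = ((P n θ0) S).toReal * ε := by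
        rw [setIntegral_const]; rfl
      calc ε * ((P n θ0) S).toReal = ∫ x in S, ε ∂(P n θ0) := by rw [hc]; ring
        _ ≤ ∫ x in S, ψ n x ∂(P n θ0) := by
            refine setIntegral_mono_on (integrableOn_const (measure_ne_top _ _))
              hint.integrableOn hS fun x hx => le_of_lt hx
    have h2 : ∫ x in S, ψ n x ∂(P n θ0) ≤ ∫ x, ψ n x ∂(P n θ0) :=
      setIntegral_le_integral hint (ae_of_all _ fun x => (hψ01 n x).1)
    have h3 : ε * ((P n θ0) S).toReal ≤ ∫ x, ψ n x ∂(P n θ0) := le_trans h1 h2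
    have h4 : ((P n θ0) S).toReal ≤ (∫ x, ψ n x ∂(P n θ0)) / ε := by
      rw [le_div_iff₀ hε]
      calc ((P n θ0) S).toReal * ε = ε * ((P n θ0) S).toReal := mul_comm _ _
        _ ≤ _ := h3
    calc ((P n θ0) S).toReal ≤ (∫ x, ψ n x ∂(P n θ0)) / ε := h4
      _ = ε⁻¹ * ∫ x, ψ n x ∂(P n θ0) := by rw [div_eq_inv_mul]
  refine squeeze_zero (fun n => ENNReal.toReal_nonneg) hmark ?_
  simpa using ht0.const_mul ε⁻¹
end

section
/- Let Θ be a Hausdorff uniform space whose topology is generated by the maps θ ↦ P_{θ,n}(A), A ∈ B_n (so that these maps are continuous), let Π_n be a Borel prior on Θ, and suppose P_{0,n} = P_{θ_0,n} where θ_0 lies in the topological support of Π_n. Then P_{0,n} is absolutely continuous with respect to the prior predictive distribution P_n^{Π_n} = ∫ P_{θ,n} dΠ_n(θ). -/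
open MeasureTheory Filter

/-- Proposition A.4 (dompriorpred): if `θ0` lies in the support of the prior
for a topology making `θ ↦ P θ A` continuous for every measurable `A`, then
`P θ0` is absolutely continuous with respect to the prior predictive
distribution. -/
theorem stmt16 {Θ : Type*} [TopologicalSpace Θ] [MeasurableSpace Θ]
    [OpensMeasurableSpace Θ] {X : Type*} [MeasurableSpace X]
    (Pri : Measure Θ) [IsProbabilityMeasure Pri]
    (P : Θ → Measure X) (hP : ∀ θ, IsProbabilityMeasure (P θ)) (hPmeas : Measurable P)
    (hcont : ∀ A : Set X, MeasurableSet A → Continuous (fun θ => (P θ A).toReal))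
    (θ0 : Θ) (hsupp : ∀ U : Set Θ, IsOpen U → θ0 ∈ U → 0 < Pri U) :
    P θ0 ≪ Pri.bind P := by
  apply Measure.AbsolutelyContinuous.mk
  intro A hA hbind
  rw [Measure.bind_apply hA hPmeas.aemeasurable] at hbind
  have hmeas : Measurable (fun θ => P θ A) := Measure.measurable_coe hA |>.comp hPmeas
  have hae : ∀ᵐ θ ∂Pri, P θ A = 0 := (lintegral_eq_zero_iff hmeas).mp hbind
  by_contra h0
  have hpos : (0 : ℝ) < (P θ0 A).toReal := by
    have hne : P θ0 A ≠ 0 := h0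
    have hlt : P θ0 A ≤ 1 := prob_le_one
    exact ENNReal.toReal_pos hne (by
      intro htop
      simp [htop] at hlt)
  set ε : ℝ := (P θ0 A).toReal / 2 with hε
  have hεpos : 0 < ε := by positivity
  set U : Set Θ := {θ | ε < (P θ A).toReal} with hU
  have hUopen : IsOpen U := isOpen_lt continuous_const (hcont A hA)
  have hθ0U : θ0 ∈ U := by
    simp only [hU, Set.mem_setOf_eq, hε]
    linarith
  have hPU : 0 < Pri U := hsupp U hUopen hθ0U
  -- but a.e. θ, P θ A = 0, so U is null
  have : Pri U = 0 := by
    refine measure_mono_null ?_ (ae_iff.mp hae)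
    intro θ hθ
    simp only [hU, Set.mem_setOf_eq] at hθ ⊢
    intro hzero
    rw [hzero] at hθ
    simp at hθ
    linarith
  exact absurd this hPU.ne'
end

section
/- In the Gaussian location model on ℝ^n where X^n = θ^n + ε^n with ε^n standard normal N(0, I_n) and P_{θ,n} = N(θ^n, I_n), for any θ, θ' ∈ ℝ^n and any measurable φ : ℝ^n → [0,1] one has P_{θ,n}[φ] ≤ (P_{θ',n}[φ])^{1/2} · exp(‖θ − θ'‖²_{2,n}/2), where ‖·‖_{2,n} is the Euclidean norm. Consequently, if B_n ⊂ ℝ^n is a set with sup_{θ ∈ B_n} ‖θ − θ_0‖²_{2,n} ≤ d_n and Π is a prior with Π(B_n) > 0, then P_{θ_0,n}[φ] ≤ e^{d_n/2}·(P_n^{Π|B_n}[φ])^{1/2}, so P_{θ_0,n} is exp(−d_n)-remotely contiguous with respect to P_n^{Π|B_n}. -/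
open MeasureTheory Filter Asymptotics ProbabilityTheory

namespace Stmt17Aux

open Real
open scoped ENNReal NNReal

/-- likelihood ratio of `N(m,1)` w.r.t. `N(m',1)` -/
noncomputable def lr (m m' : ℝ) (x : ℝ) : ℝ≥0∞ :=
  ENNReal.ofReal (rexp (((x - m') ^ 2 - (x - m) ^ 2) / 2))

lemma measurable_lr (m m' : ℝ) : Measurable (lr m m') :=
  ((((measurable_id.sub_const m').pow_const 2).sub
    ((measurable_id.sub_const m).pow_const 2)).div_const 2).exp.ennreal_ofReal

lemma gauss_eq_withDensity (m m' : ℝ) :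
    gaussianReal m 1 = (gaussianReal m' 1).withDensity (lr m m') := by
  rw [gaussianReal_of_var_ne_zero m one_ne_zero, gaussianReal_of_var_ne_zero m' one_ne_zero,
    ← withDensity_mul _ (measurable_gaussianPDF _ _) (measurable_lr m m')]
  congr 1
  funext x
  simp only [Pi.mul_apply, gaussianPDF, lr,
    ← ENNReal.ofReal_mul (gaussianPDFReal_nonneg _ _ _)]
  congr 1
  simp only [gaussianPDFReal, NNReal.coe_one, mul_one]
  rw [mul_assoc, ← Real.exp_add]
  congr 1
  ring_nf

/-- product of lintegrals over a finite product of probability measures -/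
lemma lintegral_pi_prod :
    ∀ (n : ℕ) (μ : Fin n → Measure ℝ), (∀ i, IsProbabilityMeasure (μ i)) →
    ∀ (f : Fin n → ℝ → ℝ≥0∞), (∀ i, Measurable (f i)) →
    ∫⁻ x, ∏ i, f i (x i) ∂Measure.pi μ = ∏ i, ∫⁻ x, f i x ∂μ i := by
  intro n
  induction n with
  | zero =>
    intro μ hμ f hf
    simp [lintegral_const, Measure.pi_univ]
  | succ n ih =>
    intro μ hμ f hf
    haveI := hμ
    have h0 : MeasurePreserving (MeasurableEquiv.piFinSuccAbove (fun _ : Fin (n+1) => ℝ) 0)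
        (Measure.pi μ) ((μ 0).prod (Measure.pi fun j => μ (Fin.succAbove 0 j))) :=
      measurePreserving_piFinSuccAbove μ 0
    have hginner : Measurable (fun y : Fin n → ℝ => ∏ j, f (Fin.succAbove 0 j) (y j)) :=
      Finset.measurable_prod _ fun j _ => (hf _).comp (measurable_pi_apply j)
    have hg : Measurable (fun p : ℝ × (Fin n → ℝ) =>
        f 0 p.1 * ∏ j, f (Fin.succAbove 0 j) (p.2 j)) :=
      ((hf 0).comp measurable_fst).mul (hginner.comp measurable_snd)
    calc ∫⁻ x, ∏ i, f i (x i) ∂Measure.pi μ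
        = ∫⁻ x, (fun p : ℝ × (Fin n → ℝ) => f 0 p.1 * ∏ j, f (Fin.succAbove 0 j) (p.2 j))
            ((MeasurableEquiv.piFinSuccAbove (fun _ : Fin (n+1) => ℝ) 0) x)
            ∂Measure.pi μ := by
          refine lintegral_congr fun x => ?_
          simp only [MeasurableEquiv.piFinSuccAbove_apply, Fin.removeNth]
          exact Fin.prod_univ_succAbove (fun i => f i (x i)) 0
      _ = ∫⁻ p, f 0 p.1 * ∏ j, f (Fin.succAbove 0 j) (p.2 j)
            ∂(μ 0).prod (Measure.pi fun j => μ (Fin.succAbove 0 j)) := h0.lintegral_comp hg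
      _ = (∫⁻ x, f 0 x ∂μ 0) * ∏ j, ∫⁻ x, f (Fin.succAbove 0 j) x ∂μ (Fin.succAbove 0 j) := by
          rw [lintegral_prod_mul (hf 0).aemeasurable hginner.aemeasurable,
            ih _ (fun j => hμ _) _ (fun j => hf _)]
      _ = ∏ i, ∫⁻ x, f i x ∂μ i := (Fin.prod_univ_succAbove (fun i => ∫⁻ x, f i x ∂μ i) 0).symm

/-- likelihood ratio on the product space -/
noncomputable def L {n : ℕ} (θ θ' : Fin n → ℝ) (x : Fin n → ℝ) : ℝ≥0∞ :=
  ∏ i, lr (θ i) (θ' i) (x i)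

lemma measurable_L {n : ℕ} (θ θ' : Fin n → ℝ) : Measurable (L θ θ') :=
  Finset.measurable_prod _ fun i _ => (measurable_lr _ _).comp (measurable_pi_apply i)

lemma pi_gauss_eq_withDensity {n : ℕ} (θ θ' : Fin n → ℝ) :
    Measure.pi (fun i => gaussianReal (θ i) 1)
      = (Measure.pi fun i => gaussianReal (θ' i) 1).withDensity (L θ θ') := by
  refine Measure.pi_eq fun s hs => ?_
  rw [withDensity_apply _ (MeasurableSet.univ_pi hs),
    ← lintegral_indicator (MeasurableSet.univ_pi hs)]
  have hind : ∀ x, (Set.pi Set.univ s).indicator (L θ θ') x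
      = ∏ i, (s i).indicator (lr (θ i) (θ' i)) (x i) := by
    intro x
    by_cases hx : x ∈ Set.pi Set.univ s
    · rw [Set.indicator_of_mem hx, L]
      refine Finset.prod_congr rfl fun i _ => ?_
      rw [Set.indicator_of_mem (hx i (Set.mem_univ i))]
    · rw [Set.indicator_of_notMem hx]
      rw [Set.mem_univ_pi] at hx
      push_neg at hx
      obtain ⟨i, hi⟩ := hx
      exact (Finset.prod_eq_zero (Finset.mem_univ i)
        (by rw [Set.indicator_of_notMem hi])).symm
  simp_rw [hind]
  rw [lintegral_pi_prod n _ (fun i => inferInstance) _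
    (fun i => (measurable_lr _ _).indicator (hs i))]
  refine Finset.prod_congr rfl fun i _ => ?_
  rw [lintegral_indicator (hs i), ← withDensity_apply _ (hs i), ← gauss_eq_withDensity]

/-- the second moment of the 1d likelihood ratio -/
lemma lintegral_lr_sq (m m' : ℝ) :
    ∫⁻ x, lr m m' x * lr m m' x ∂gaussianReal m' 1
      = ENNReal.ofReal (rexp ((m - m') ^ 2)) := by
  rw [gaussianReal_of_var_ne_zero m' one_ne_zero,
    lintegral_withDensity_eq_lintegral_mul _ (measurable_gaussianPDF _ _)
      (g := fun x => lr m m' x * lr m m' x) ((measurable_lr m m').mul (measurable_lr m m'))]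
  have hre : ∀ x : ℝ, gaussianPDFReal m' 1 x
      * (rexp (((x - m') ^ 2 - (x - m) ^ 2) / 2) * rexp (((x - m') ^ 2 - (x - m) ^ 2) / 2))
      = rexp ((m - m') ^ 2) * gaussianPDFReal (2 * m - m') 1 x := by
    intro x
    simp only [gaussianPDFReal, NNReal.coe_one, mul_one]
    rw [mul_comm (rexp ((m - m') ^ 2))]
    simp only [mul_assoc, ← Real.exp_add]
    congr 1
    rw [Real.exp_eq_exp]
    ring_nf
  have : (gaussianPDF m' 1 * fun x => lr m m' x * lr m m' x)
      = fun x => ENNReal.ofReal (rexp ((m - m') ^ 2)) * gaussianPDF (2 * m - m') 1 x := by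
    funext x
    simp only [Pi.mul_apply, gaussianPDF, lr]
    rw [← ENNReal.ofReal_mul (Real.exp_nonneg _),
      ← ENNReal.ofReal_mul (gaussianPDFReal_nonneg _ _ _),
      ← ENNReal.ofReal_mul (Real.exp_nonneg _), hre]
  rw [this, lintegral_const_mul _ (measurable_gaussianPDF _ _),
    lintegral_gaussianPDF_eq_one _ one_ne_zero, mul_one]

/-- Cauchy-Schwarz bound, `ℝ≥0∞` version -/
lemma core {n : ℕ} (θ θ' : Fin n → ℝ) (φ : (Fin n → ℝ) → ℝ≥0∞) (hm : Measurable φ)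
    (h1 : ∀ x, φ x ≤ 1) :
    ∫⁻ x, φ x ∂(Measure.pi fun i => gaussianReal (θ i) 1)
      ≤ (∫⁻ x, φ x ∂(Measure.pi fun i => gaussianReal (θ' i) 1)) ^ (1/2 : ℝ)
        * ENNReal.ofReal (rexp ((∑ i, (θ i - θ' i) ^ 2) / 2)) := by
  set ν := Measure.pi fun i => gaussianReal (θ' i) 1 with hν
  have h2 : Real.HolderConjugate 2 2 := Real.HolderConjugate.two_two
  have hLsq : ∫⁻ x, L θ θ' x ^ (2:ℝ) ∂ν = ENNReal.ofReal (rexp (∑ i, (θ i - θ' i) ^ 2)) := by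
    have hLsq' : ∀ x, L θ θ' x ^ (2:ℝ)
        = ∏ i, (lr (θ i) (θ' i) (x i) * lr (θ i) (θ' i) (x i)) := by
      intro x
      rw [show ((2:ℝ)) = ((2:ℕ):ℝ) by norm_num, ENNReal.rpow_natCast, L, ← Finset.prod_pow]
      exact Finset.prod_congr rfl fun i _ => pow_two (lr (θ i) (θ' i) (x i))
    simp_rw [hLsq']
    rw [lintegral_pi_prod n _ (fun i => inferInstance) (fun i x => lr (θ i) (θ' i) x * lr (θ i) (θ' i) x)
      (fun i => (measurable_lr _ _).mul (measurable_lr _ _))]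
    simp_rw [lintegral_lr_sq]
    rw [← ENNReal.ofReal_prod_of_nonneg (fun i _ => Real.exp_nonneg _), ← Real.exp_sum]
  calc ∫⁻ x, φ x ∂(Measure.pi fun i => gaussianReal (θ i) 1)
      = ∫⁻ x, (φ * L θ θ') x ∂ν := by
        rw [pi_gauss_eq_withDensity θ θ', ← hν,
          lintegral_withDensity_eq_lintegral_mul _ (measurable_L θ θ') hm]
        refine lintegral_congr fun x => ?_
        simp [mul_comm]
    _ ≤ (∫⁻ x, φ x ^ (2:ℝ) ∂ν) ^ (1/(2:ℝ)) * (∫⁻ x, L θ θ' x ^ (2:ℝ) ∂ν) ^ (1/(2:ℝ)) :=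
        ENNReal.lintegral_mul_le_Lp_mul_Lq ν h2 hm.aemeasurable
          (measurable_L θ θ').aemeasurable
    _ ≤ (∫⁻ x, φ x ∂ν) ^ (1/(2:ℝ))
        * ENNReal.ofReal (rexp ((∑ i, (θ i - θ' i) ^ 2) / 2)) := by
        refine mul_le_mul' (ENNReal.rpow_le_rpow (lintegral_mono fun x => ?_) (by norm_num)) ?_
        · have h2' : φ x ^ (2:ℝ) = φ x * φ x := by
            rw [show ((2:ℝ)) = ((2:ℕ):ℝ) by norm_num, ENNReal.rpow_natCast, pow_two]
          rw [h2']
          exact (mul_le_mul_right (h1 x) _).trans_eq (mul_one _)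
        · rw [hLsq, ENNReal.ofReal_rpow_of_pos (Real.exp_pos _), ← Real.exp_mul,
            show (∑ i, (θ i - θ' i) ^ 2) * (1/(2:ℝ)) = (∑ i, (θ i - θ' i) ^ 2) / 2 by ring]

lemma measurable_kernel (n : ℕ) :
    Measurable (fun θ : Fin n → ℝ => Measure.pi fun i => gaussianReal (θ i) 1) := by
  apply Measure.measurable_of_measurable_coe
  intro s hs
  have hind : ∀ (θ : Fin n → ℝ) (x : Fin n → ℝ), s.indicator (L θ (0 : Fin n → ℝ)) x
      = L θ 0 x * s.indicator (fun _ => (1 : ℝ≥0∞)) x := by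
    intro θ x
    by_cases h : x ∈ s <;> simp [h]
  have hrw : (fun θ : Fin n → ℝ => (Measure.pi fun i => gaussianReal (θ i) 1) s)
      = fun θ => ∫⁻ x, L θ 0 x * s.indicator (fun _ => (1 : ℝ≥0∞)) x
          ∂(Measure.pi fun _ : Fin n => gaussianReal 0 1) := by
    funext θ
    rw [show (Measure.pi fun i => gaussianReal (θ i) 1)
        = (Measure.pi fun _ : Fin n => gaussianReal 0 1).withDensity (L θ 0) from
        pi_gauss_eq_withDensity θ 0,
      withDensity_apply _ hs, ← lintegral_indicator hs]
    exact lintegral_congr (hind θ)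
  rw [hrw]
  apply Measurable.lintegral_prod_right
  apply Measurable.mul
  · refine Finset.measurable_prod _ fun i _ => Measurable.ennreal_ofReal (Measurable.exp ?_)
    apply Measurable.div_const
    exact ((((measurable_pi_apply i).comp measurable_snd).sub_const _).pow_const 2).sub
      ((((measurable_pi_apply i).comp measurable_snd).sub
        ((measurable_pi_apply i).comp measurable_fst)).pow_const 2)
  · exact (measurable_const.indicator hs).comp measurable_snd

lemma measurable_I {n : ℕ} (ψ : (Fin n → ℝ) → ℝ≥0∞) (hψ : Measurable ψ) :
    Measurable (fun θ : Fin n → ℝ => ∫⁻ x, ψ x ∂(Measure.pi fun i => gaussianReal (θ i) 1)) :=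
  (Measure.measurable_lintegral hψ).comp (measurable_kernel n)

/-- `ℝ≥0∞`-integral of `ofReal ∘ φ` against a probability measure is at most 1. -/
lemma lint_le_one {n : ℕ} (μ : Measure (Fin n → ℝ)) [IsProbabilityMeasure μ]
    (φ : (Fin n → ℝ) → ℝ) (h1 : ∀ x, φ x ≤ 1) :
    ∫⁻ x, ENNReal.ofReal (φ x) ∂μ ≤ 1 := by
  calc ∫⁻ x, ENNReal.ofReal (φ x) ∂μ ≤ ∫⁻ _, 1 ∂μ :=
        lintegral_mono fun x => ENNReal.ofReal_le_one.mpr (h1 x)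
    _ = 1 := by simp

lemma int_eq_toReal {n : ℕ} (μ : Measure (Fin n → ℝ))
    (φ : (Fin n → ℝ) → ℝ) (hm : Measurable φ) (h0 : ∀ x, 0 ≤ φ x) :
    ∫ x, φ x ∂μ = (∫⁻ x, ENNReal.ofReal (φ x) ∂μ).toReal :=
  integral_eq_lintegral_of_nonneg_ae (ae_of_all _ h0) hm.aestronglyMeasurable

/-- Part 1, real form. -/
lemma part1 {n : ℕ} (θ θ' : Fin n → ℝ) (φ : (Fin n → ℝ) → ℝ) (hm : Measurable φ)
    (h01 : ∀ x, 0 ≤ φ x ∧ φ x ≤ 1) :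
    ∫ x, φ x ∂(Measure.pi fun i => gaussianReal (θ i) 1)
      ≤ Real.sqrt (∫ x, φ x ∂(Measure.pi fun i => gaussianReal (θ' i) 1))
        * Real.exp ((∑ i, (θ i - θ' i) ^ 2) / 2) := by
  have key := core θ θ' (fun x => ENNReal.ofReal (φ x)) hm.ennreal_ofReal
    (fun x => ENNReal.ofReal_le_one.mpr (h01 x).2)
  have hν1 : ∫⁻ x, ENNReal.ofReal (φ x) ∂(Measure.pi fun i => gaussianReal (θ' i) 1) ≤ 1 :=
    lint_le_one _ _ fun x => (h01 x).2
  have hne : (∫⁻ x, ENNReal.ofReal (φ x) ∂(Measure.pi fun i => gaussianReal (θ' i) 1)) ^ (1/2 : ℝ)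
      * ENNReal.ofReal (rexp ((∑ i, (θ i - θ' i) ^ 2) / 2)) ≠ ⊤ :=
    ENNReal.mul_ne_top (ENNReal.rpow_ne_top_of_nonneg (by norm_num)
      (lt_of_le_of_lt hν1 ENNReal.one_lt_top).ne) ENNReal.ofReal_ne_top
  calc ∫ x, φ x ∂(Measure.pi fun i => gaussianReal (θ i) 1)
      = (∫⁻ x, ENNReal.ofReal (φ x) ∂(Measure.pi fun i => gaussianReal (θ i) 1)).toReal :=
        int_eq_toReal _ _ hm fun x => (h01 x).1
    _ ≤ ((∫⁻ x, ENNReal.ofReal (φ x) ∂(Measure.pi fun i => gaussianReal (θ' i) 1)) ^ (1/2 : ℝ)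
        * ENNReal.ofReal (rexp ((∑ i, (θ i - θ' i) ^ 2) / 2))).toReal :=
        ENNReal.toReal_mono hne key
    _ = Real.sqrt (∫ x, φ x ∂(Measure.pi fun i => gaussianReal (θ' i) 1))
        * Real.exp ((∑ i, (θ i - θ' i) ^ 2) / 2) := by
        rw [ENNReal.toReal_mul, ENNReal.toReal_ofReal (Real.exp_nonneg _),
          ← ENNReal.toReal_rpow, ← Real.sqrt_eq_rpow,
          int_eq_toReal _ _ hm (fun x => (h01 x).1)]

/-- Part 2, real form. -/
lemma part2 {n : ℕ} (θ0 : Fin n → ℝ) (Pri : Measure (Fin n → ℝ)) [IsProbabilityMeasure Pri]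
    (B : Set (Fin n → ℝ)) (hBmeas : MeasurableSet B) (hPriB : 0 < Pri B)
    (d : ℝ) (hd : ∀ θ ∈ B, ∑ i, (θ i - θ0 i) ^ 2 ≤ d)
    (φ : (Fin n → ℝ) → ℝ) (hm : Measurable φ) (h01 : ∀ x, 0 ≤ φ x ∧ φ x ≤ 1) :
    ∫ x, φ x ∂(Measure.pi fun i => gaussianReal (θ0 i) 1)
      ≤ Real.exp (d / 2) *
        Real.sqrt (∫ x, φ x ∂((Pri B)⁻¹ •
          ((Pri.restrict B).bind (fun θ => Measure.pi fun i => gaussianReal (θ i) 1)))) := by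
  set ψ : (Fin n → ℝ) → ℝ≥0∞ := fun x => ENNReal.ofReal (φ x) with hψdef
  have hψm : Measurable ψ := hm.ennreal_ofReal
  have hψ1 : ∀ x, ψ x ≤ 1 := fun x => ENNReal.ofReal_le_one.mpr (h01 x).2
  set I : (Fin n → ℝ) → ℝ≥0∞ :=
    fun θ => ∫⁻ x, ψ x ∂(Measure.pi fun i => gaussianReal (θ i) 1) with hIdef
  have hIm : Measurable I := measurable_I ψ hψm
  have hIle1 : ∀ θ, I θ ≤ 1 := fun θ => lint_le_one _ _ fun x => (h01 x).2
  set Q : Measure (Fin n → ℝ) :=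
    (Pri.restrict B).bind (fun θ => Measure.pi fun i => gaussianReal (θ i) 1) with hQdef
  have hb0 : Pri B ≠ 0 := hPriB.ne'
  have hb1 : Pri B ≠ ⊤ := measure_ne_top _ _
  have hpt : ∀ θ ∈ B, I θ0 ^ (2:ℝ) ≤ I θ * ENNReal.ofReal (rexp d) := by
    intro θ hθ
    have h1 : I θ0 ≤ I θ ^ (1/2 : ℝ) * ENNReal.ofReal (rexp (d / 2)) := by
      refine (core θ0 θ ψ hψm hψ1).trans (mul_le_mul' le_rfl ?_)
      refine ENNReal.ofReal_le_ofReal (Real.exp_le_exp.mpr ?_)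
      have hsum : ∑ i, (θ0 i - θ i) ^ 2 = ∑ i, (θ i - θ0 i) ^ 2 :=
        Finset.sum_congr rfl fun i _ => by ring
      rw [hsum]
      linarith [hd θ hθ]
    have h2 := ENNReal.rpow_le_rpow h1 (by norm_num : (0:ℝ) ≤ 2)
    calc I θ0 ^ (2:ℝ) ≤ (I θ ^ (1/2 : ℝ) * ENNReal.ofReal (rexp (d / 2))) ^ (2:ℝ) := h2
      _ = I θ * ENNReal.ofReal (rexp d) := by
          rw [ENNReal.mul_rpow_of_nonneg _ _ (by norm_num : (0:ℝ) ≤ 2),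
            ← ENNReal.rpow_mul, show (1/2 : ℝ) * 2 = 1 by norm_num, ENNReal.rpow_one,
            ENNReal.ofReal_rpow_of_pos (Real.exp_pos _), ← Real.exp_mul,
            show d / 2 * 2 = d by ring]
  have hQlint : ∫⁻ x, ψ x ∂Q = ∫⁻ θ in B, I θ ∂Pri := by
    rw [hQdef, Measure.lintegral_bind (measurable_kernel n).aemeasurable hψm.aemeasurable]
  have hkey : I θ0 ^ (2:ℝ) * Pri B ≤ (∫⁻ x, ψ x ∂Q) * ENNReal.ofReal (rexp d) := by
    calc I θ0 ^ (2:ℝ) * Pri B = ∫⁻ _ in B, I θ0 ^ (2:ℝ) ∂Pri := (setLIntegral_const _ _).symm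
      _ ≤ ∫⁻ θ in B, I θ * ENNReal.ofReal (rexp d) ∂Pri :=
          setLIntegral_mono (hIm.mul measurable_const) hpt
      _ = (∫⁻ θ in B, I θ ∂Pri) * ENNReal.ofReal (rexp d) :=
          lintegral_mul_const _ hIm
      _ = (∫⁻ x, ψ x ∂Q) * ENNReal.ofReal (rexp d) := by rw [hQlint]
  set J : ℝ≥0∞ := ∫⁻ x, ψ x ∂((Pri B)⁻¹ • Q) with hJdef
  have hJ : J = (Pri B)⁻¹ * ∫⁻ x, ψ x ∂Q := by rw [hJdef, lintegral_smul_measure, smul_eq_mul]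
  have hQval : ∫⁻ x, ψ x ∂Q = Pri B * J := by
    rw [hJ, ← mul_assoc, ENNReal.mul_inv_cancel hb0 hb1, one_mul]
  have hmain : I θ0 ^ (2:ℝ) ≤ J * ENNReal.ofReal (rexp d) := by
    rw [hQval, mul_assoc] at hkey
    rw [mul_comm] at hkey
    exact (ENNReal.mul_le_mul_iff_right hb0 hb1).mp hkey
  have hIJ : I θ0 ≤ J ^ (1/2 : ℝ) * ENNReal.ofReal (rexp (d / 2)) := by
    have h3 := ENNReal.rpow_le_rpow hmain (by norm_num : (0:ℝ) ≤ 1/2)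
    calc I θ0 = (I θ0 ^ (2:ℝ)) ^ (1/2 : ℝ) := by
          rw [← ENNReal.rpow_mul, show (2:ℝ) * (1/2) = 1 by norm_num, ENNReal.rpow_one]
      _ ≤ (J * ENNReal.ofReal (rexp d)) ^ (1/2 : ℝ) := h3
      _ = J ^ (1/2 : ℝ) * ENNReal.ofReal (rexp (d / 2)) := by
          rw [ENNReal.mul_rpow_of_nonneg _ _ (by norm_num : (0:ℝ) ≤ 1/2),
            ENNReal.ofReal_rpow_of_pos (Real.exp_pos _), ← Real.exp_mul,
            show d * (1/2 : ℝ) = d / 2 by ring]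
  have hYb : ∫⁻ x, ψ x ∂Q ≤ Pri B := by
    rw [hQlint]
    calc ∫⁻ θ in B, I θ ∂Pri ≤ ∫⁻ _ in B, 1 ∂Pri := setLIntegral_mono measurable_const
          (fun θ _ => hIle1 θ)
      _ = Pri B := by rw [setLIntegral_const, one_mul]
  have hJ1 : J ≤ 1 := by
    rw [hJ]
    calc (Pri B)⁻¹ * ∫⁻ x, ψ x ∂Q ≤ (Pri B)⁻¹ * Pri B := mul_le_mul' le_rfl hYb
      _ = 1 := ENNReal.inv_mul_cancel hb0 hb1
  have hne : J ^ (1/2 : ℝ) * ENNReal.ofReal (rexp (d / 2)) ≠ ⊤ :=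
    ENNReal.mul_ne_top (ENNReal.rpow_ne_top_of_nonneg (by norm_num)
      (lt_of_le_of_lt hJ1 ENNReal.one_lt_top).ne) ENNReal.ofReal_ne_top
  calc ∫ x, φ x ∂(Measure.pi fun i => gaussianReal (θ0 i) 1)
      = (I θ0).toReal := int_eq_toReal _ _ hm fun x => (h01 x).1
    _ ≤ (J ^ (1/2 : ℝ) * ENNReal.ofReal (rexp (d / 2))).toReal := ENNReal.toReal_mono hne hIJ
    _ = Real.exp (d / 2) * Real.sqrt (∫ x, φ x ∂((Pri B)⁻¹ • Q)) := by
        rw [ENNReal.toReal_mul, ENNReal.toReal_ofReal (Real.exp_nonneg _),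
          ← ENNReal.toReal_rpow, ← Real.sqrt_eq_rpow,
          int_eq_toReal ((Pri B)⁻¹ • Q) _ hm (fun x => (h01 x).1), mul_comm]

end Stmt17Aux

open Stmt17Aux in
/-- Example 4.15-type bound (sparse normal means, inequality (eq:CS)): the
Cauchy–Schwarz likelihood bound in the Gaussian location model and the
resulting `exp(-d n)`-remote contiguity with respect to the local prior
predictive distribution. -/
theorem stmt17
    (θ0 : (n : ℕ) → Fin n → ℝ)
    (Pri : (n : ℕ) → Measure (Fin n → ℝ)) (hPri : ∀ n, IsProbabilityMeasure (Pri n))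
    (B : (n : ℕ) → Set (Fin n → ℝ)) (hBmeas : ∀ n, MeasurableSet (B n))
    (hPriB : ∀ n, 0 < (Pri n) (B n))
    (d : ℕ → ℝ)
    (hd : ∀ n, ∀ θ ∈ B n, ∑ i, (θ i - θ0 n i) ^ 2 ≤ d n) :
    (∀ (n : ℕ) (θ θ' : Fin n → ℝ) (φ : (Fin n → ℝ) → ℝ), Measurable φ →
      (∀ x, 0 ≤ φ x ∧ φ x ≤ 1) →
      ∫ x, φ x ∂(Measure.pi fun i => gaussianReal (θ i) 1)
        ≤ Real.sqrt (∫ x, φ x ∂(Measure.pi fun i => gaussianReal (θ' i) 1))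
          * Real.exp ((∑ i, (θ i - θ' i) ^ 2) / 2)) ∧
    (∀ (n : ℕ) (φ : (Fin n → ℝ) → ℝ), Measurable φ → (∀ x, 0 ≤ φ x ∧ φ x ≤ 1) →
      ∫ x, φ x ∂(Measure.pi fun i => gaussianReal (θ0 n i) 1)
        ≤ Real.exp (d n / 2) *
          Real.sqrt (∫ x, φ x ∂(((Pri n) (B n))⁻¹ •
            (((Pri n).restrict (B n)).bind
              (fun θ => Measure.pi fun i => gaussianReal (θ i) 1))))) ∧
    (∀ φ : (n : ℕ) → (Fin n → ℝ) → ℝ, (∀ n, Measurable (φ n)) →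
      (∀ n x, 0 ≤ φ n x ∧ φ n x ≤ 1) →
      (fun n => ∫ x, φ n x ∂(((Pri n) (B n))⁻¹ •
          (((Pri n).restrict (B n)).bind
            (fun θ => Measure.pi fun i => gaussianReal (θ i) 1))))
        =o[atTop] (fun n => Real.exp (-(d n))) →
      Tendsto (fun n => ∫ x, φ n x ∂(Measure.pi fun i => gaussianReal (θ0 n i) 1))
        atTop (nhds 0)) := by
  have hp2 : ∀ (n : ℕ) (φ : (Fin n → ℝ) → ℝ), Measurable φ → (∀ x, 0 ≤ φ x ∧ φ x ≤ 1) →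
      ∫ x, φ x ∂(Measure.pi fun i => gaussianReal (θ0 n i) 1)
        ≤ Real.exp (d n / 2) *
          Real.sqrt (∫ x, φ x ∂(((Pri n) (B n))⁻¹ •
            (((Pri n).restrict (B n)).bind
              (fun θ => Measure.pi fun i => gaussianReal (θ i) 1)))) := by
    intro n φ hm h01
    haveI := hPri n
    exact part2 (θ0 n) (Pri n) (B n) (hBmeas n) (hPriB n) (d n) (hd n) φ hm h01
  refine ⟨fun n θ θ' φ hm h01 => part1 θ θ' φ hm h01, hp2, ?_⟩
  intro φ hm h01 ho
  rw [NormedAddCommGroup.tendsto_nhds_zero]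
  intro ε hε
  have hc : (0:ℝ) < (ε/2)^2 := by positivity
  filter_upwards [ho.def hc] with n hn
  have hg0 : (0:ℝ) ≤ ∫ x, φ n x ∂(((Pri n) (B n))⁻¹ •
      (((Pri n).restrict (B n)).bind (fun θ => Measure.pi fun i => gaussianReal (θ i) 1))) :=
    integral_nonneg fun x => (h01 n x).1
  rw [Real.norm_eq_abs, abs_of_nonneg hg0, Real.norm_eq_abs,
    abs_of_pos (Real.exp_pos _)] at hn
  have hf0 : (0:ℝ) ≤ ∫ x, φ n x ∂(Measure.pi fun i => gaussianReal (θ0 n i) 1) :=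
    integral_nonneg fun x => (h01 n x).1
  rw [Real.norm_eq_abs, abs_of_nonneg hf0]
  calc ∫ x, φ n x ∂(Measure.pi fun i => gaussianReal (θ0 n i) 1)
      ≤ Real.exp (d n / 2) *
        Real.sqrt (∫ x, φ n x ∂(((Pri n) (B n))⁻¹ •
          (((Pri n).restrict (B n)).bind
            (fun θ => Measure.pi fun i => gaussianReal (θ i) 1)))) :=
        hp2 n (φ n) (hm n) (h01 n)
    _ ≤ Real.exp (d n / 2) * Real.sqrt ((ε/2)^2 * Real.exp (-(d n))) :=
        mul_le_mul_of_nonneg_left (Real.sqrt_le_sqrt hn) (Real.exp_nonneg _)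
    _ = ε/2 := by
        rw [Real.sqrt_mul (sq_nonneg _), Real.sqrt_sq (by positivity : (0:ℝ) ≤ ε/2),
          Real.sqrt_eq_rpow, ← Real.exp_mul,
          show -(d n) * (1/2 : ℝ) = -(d n / 2) by ring,
          mul_comm (ε/2) (Real.exp (-(d n / 2))), ← mul_assoc, ← Real.exp_add,
          show d n / 2 + -(d n / 2) = 0 by ring, Real.exp_zero, one_mul]
    _ < ε := by linarith
end

section
/- Let X be a finite sample space of order N, identify probability measures on X with the simplex S_N ⊂ ℝ^N with the L¹-metric, and let Π be a Borel prior of full support on S_N. For any P_0 ∈ S_N and any L¹-ball B around P_0, there exists ε' > 0 such that for all 0 < ε < ε', the i.i.d. product measures satisfy: P_0^n is exp(n ε²/2)-remotely contiguous with respect to the local prior predictive distributions P_n^{Π|B}, i.e., for any measurable φ_n : X^n → [0,1], P_n^{Π|B}[φ_n] = o(exp(−n ε²/2)) implies P_0^n[φ_n] = o(1). -/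
open MeasureTheory Filter Asymptotics

/-- The probability measure on a finite sample space with pmf `p`. -/
noncomputable def pmfMeasure {X : Type*} [MeasurableSpace X] (p : X → ℝ) : Measure X :=
  Measure.count.withDensity fun x => ENNReal.ofReal (p x)

open scoped ENNReal
lemma pmfMeasure_singleton {X : Type*} [MeasurableSpace X] [MeasurableSingletonClass X]
    (p : X → ℝ) (x : X) : pmfMeasure p {x} = ENNReal.ofReal (p x) := by
  rw [pmfMeasure, withDensity_apply _ (measurableSet_singleton x), lintegral_singleton,
    Measure.count_singleton, mul_one]

lemma measure_eq_sum_singleton' {α : Type*} [Fintype α] [MeasurableSpace α]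
    [MeasurableSingletonClass α] (ν : Measure α) (s : Set α) :
    ν s = ∑ x ∈ (Set.toFinite s).toFinset, ν {x} := by
  conv_lhs => rw [show s = ⋃ x ∈ (Set.toFinite s).toFinset, {x} by
    ext y; simp [Set.Finite.mem_toFinset]]
  rw [measure_biUnion_finset (fun x _ y _ hxy => by simp [Set.disjoint_singleton, hxy])
    (fun x _ => measurableSet_singleton x)]

instance pmfMeasure_finite {X : Type*} [Fintype X] [MeasurableSpace X]
    [MeasurableSingletonClass X] (p : X → ℝ) : IsFiniteMeasure (pmfMeasure p) := by
  constructor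
  rw [measure_eq_sum_singleton']
  exact lt_of_le_of_lt (Finset.sum_le_sum (fun x _ => (pmfMeasure_singleton p x).le))
    (by exact ENNReal.sum_lt_top.2 fun x _ => ENNReal.ofReal_lt_top)

lemma pi_pmf_singleton {X : Type*} [Fintype X] [MeasurableSpace X] [MeasurableSingletonClass X]
    (p : X → ℝ) (n : ℕ) (x : Fin n → X) :
    (Measure.pi fun _ : Fin n => pmfMeasure p) {x} = ∏ i, ENNReal.ofReal (p (x i)) := by
  rw [← Set.univ_pi_singleton x, Measure.pi_pi]
  simp [pmfMeasure_singleton]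

lemma pmfMeasure_isProb {X : Type*} [Fintype X] [MeasurableSpace X] [MeasurableSingletonClass X]
    {p : X → ℝ} (hp : p ∈ stdSimplex ℝ X) : IsProbabilityMeasure (pmfMeasure p) := by
  constructor
  rw [measure_eq_sum_singleton']
  rw [Finset.sum_congr rfl (fun x _ => pmfMeasure_singleton p x),
    show (Set.toFinite (Set.univ : Set X)).toFinset = Finset.univ by
      ext; simp [Set.Finite.mem_toFinset],
    ← ENNReal.ofReal_sum_of_nonneg (fun x _ => hp.1 x), hp.2, ENNReal.ofReal_one]

lemma pi_pmf_isProb {X : Type*} [Fintype X] [MeasurableSpace X] [MeasurableSingletonClass X]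
    {p : X → ℝ} (hp : p ∈ stdSimplex ℝ X) (n : ℕ) :
    IsProbabilityMeasure (Measure.pi fun _ : Fin n => pmfMeasure p) := by
  haveI := pmfMeasure_isProb hp
  infer_instance

lemma lintegral_pi_pmf {X : Type*} [Fintype X] [MeasurableSpace X] [MeasurableSingletonClass X]
    (p : X → ℝ) (n : ℕ) (f : (Fin n → X) → ℝ≥0∞) :
    ∫⁻ x, f x ∂(Measure.pi fun _ : Fin n => pmfMeasure p) =
      ∑ x : Fin n → X, f x * ∏ i, ENNReal.ofReal (p (x i)) := by
  rw [lintegral_fintype]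
  exact Finset.sum_congr rfl fun x _ => by rw [pi_pmf_singleton]

lemma lintegral_pi_pmf_compare {X : Type*} [Fintype X] [MeasurableSpace X]
    [MeasurableSingletonClass X] {p p0 : X → ℝ} {ρ : ℝ} (hρ : 0 ≤ ρ)
    (h : ∀ x, ρ * p0 x ≤ p x) (_hp0 : ∀ x, 0 ≤ p0 x) (n : ℕ) (f : (Fin n → X) → ℝ≥0∞) :
    ENNReal.ofReal ρ ^ n * ∫⁻ x, f x ∂(Measure.pi fun _ : Fin n => pmfMeasure p0) ≤
      ∫⁻ x, f x ∂(Measure.pi fun _ : Fin n => pmfMeasure p) := by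
  rw [lintegral_pi_pmf, lintegral_pi_pmf, Finset.mul_sum]
  refine Finset.sum_le_sum fun x _ => ?_
  rw [show ENNReal.ofReal ρ ^ n * (f x * ∏ i, ENNReal.ofReal (p0 (x i))) =
      f x * ((∏ _i : Fin n, ENNReal.ofReal ρ) * ∏ i, ENNReal.ofReal (p0 (x i))) by
      rw [Finset.prod_const, Finset.card_univ, Fintype.card_fin]; ring, ← Finset.prod_mul_distrib]
  refine mul_le_mul_right (Finset.prod_le_prod' fun i _ => ?_) _
  rw [← ENNReal.ofReal_mul hρ]
  exact ENNReal.ofReal_le_ofReal (h (x i))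

lemma measurable_pi_pmf_kernel {X : Type*} [Fintype X] [MeasurableSpace X]
    [MeasurableSingletonClass X] (n : ℕ) :
    Measurable fun p : {p : X → ℝ // p ∈ stdSimplex ℝ X} =>
      Measure.pi fun _ : Fin n => pmfMeasure p.1 := by
  refine Measure.measurable_of_measurable_coe _ fun s hs => ?_
  have : ∀ p : {p : X → ℝ // p ∈ stdSimplex ℝ X},
      (Measure.pi fun _ : Fin n => pmfMeasure p.1) s =
        ∑ x ∈ (Set.toFinite s).toFinset, ∏ i, ENNReal.ofReal (p.1 (x i)) := by
    intro p
    rw [measure_eq_sum_singleton']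
    exact Finset.sum_congr rfl fun x _ => pi_pmf_singleton _ _ _
  simp only [this]
  refine Finset.measurable_sum _ fun x _ => Finset.measurable_prod _ fun i _ => ?_
  exact ENNReal.measurable_ofReal.comp ((measurable_pi_apply (x i)).comp measurable_subtype_coe)

/-- Proposition C.9 (rcfiniteX): for a finite sample space and a prior of full
support on the simplex, `P0ⁿ` is `exp(n ε²/2)`-remotely contiguous with respect
to the local prior predictive distributions over any L¹-ball around `P0`, for
all sufficiently small `ε > 0`. -/
theorem stmt18 {X : Type*} [Fintype X] [MeasurableSpace X] [MeasurableSingletonClass X]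
    (Pri : Measure {p : X → ℝ // p ∈ stdSimplex ℝ X}) [IsProbabilityMeasure Pri]
    (hsupp : ∀ U : Set {p : X → ℝ // p ∈ stdSimplex ℝ X},
      IsOpen U → U.Nonempty → 0 < Pri U)
    (p0 : {p : X → ℝ // p ∈ stdSimplex ℝ X}) (r : ℝ) (hr : 0 < r) :
    ∃ ε' > (0:ℝ), ∀ ε : ℝ, 0 < ε → ε < ε' →
      ∀ φ : (n : ℕ) → (Fin n → X) → ℝ, (∀ n, Measurable (φ n)) →
        (∀ n x, 0 ≤ φ n x ∧ φ n x ≤ 1) →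
        (fun n => ∫ x, φ n x ∂(
            (Pri {p | ∑ y, |p.1 y - p0.1 y| < r})⁻¹ •
              ((Pri.restrict {p | ∑ y, |p.1 y - p0.1 y| < r}).bind
                (fun p => Measure.pi fun _ : Fin n => pmfMeasure p.1))))
          =o[atTop] (fun n => Real.exp (-(n * ε ^ 2) / 2)) →
        Tendsto (fun n => ∫ x, φ n x ∂(Measure.pi fun _ : Fin n => pmfMeasure p0.1))
          atTop (nhds 0) := by
  refine ⟨1, one_pos, fun ε hε _ φ hφm hφ01 h => ?_⟩
  set B : Set {p : X → ℝ // p ∈ stdSimplex ℝ X} := {p | ∑ y, |p.1 y - p0.1 y| < r} with hBdef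
  -- B is open and contains p0
  have hBopen : IsOpen B := by
    have hc : Continuous fun p : {p : X → ℝ // p ∈ stdSimplex ℝ X} =>
        ∑ y, |p.1 y - p0.1 y| :=
      continuous_finset_sum _ fun y _ =>
        (((continuous_apply y).comp continuous_subtype_val).sub continuous_const).abs
    exact isOpen_Iio.preimage hc
  have hp0B : p0 ∈ B := by simp [hBdef, hr]
  -- the multiplicative constant ρ = exp(-ε²/2)
  set ρ : ℝ := Real.exp (-(ε ^ 2) / 2) with hρdef
  have hρpos : 0 < ρ := Real.exp_pos _
  have hρlt : ρ < 1 := by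
    rw [hρdef, Real.exp_lt_one_iff]
    nlinarith
  -- the set A
  set A : Set {p : X → ℝ // p ∈ stdSimplex ℝ X} :=
    {p | ∀ x, p0.1 x ≠ 0 → ρ * p0.1 x < p.1 x} with hAdef
  have hAopen : IsOpen A := by
    rw [show A = ⋂ x : X,
        {p : {p : X → ℝ // p ∈ stdSimplex ℝ X} | p0.1 x ≠ 0 → ρ * p0.1 x < p.1 x} by
      ext p; simp [hAdef, Set.mem_iInter]]
    refine isOpen_iInter_of_finite fun x => ?_
    by_cases hx : p0.1 x = 0
    · simp only [hx, ne_eq, not_true_eq_false, false_implies, Set.setOf_true]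
      exact isOpen_univ
    · simp only [hx, ne_eq, not_false_eq_true, true_implies]
      exact isOpen_lt continuous_const ((continuous_apply x).comp continuous_subtype_val)
  have hp0A : p0 ∈ A := fun x hx => by
    have h1 : 0 < p0.1 x := lt_of_le_of_ne (p0.2.1 x) (Ne.symm hx)
    nlinarith
  -- positivity of prior masses
  have hcB : 0 < Pri B := hsupp B hBopen ⟨p0, hp0B⟩
  have hcBne : Pri B ≠ 0 := hcB.ne'
  have hcBfin : Pri B ≠ ⊤ := (lt_of_le_of_lt prob_le_one ENNReal.one_lt_top).ne
  have hc2 : 0 < Pri (A ∩ B) := hsupp _ (hAopen.inter hBopen) ⟨p0, hp0A, hp0B⟩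
  have hc2fin : Pri (A ∩ B) ≠ ⊤ := (lt_of_le_of_lt prob_le_one ENNReal.one_lt_top).ne
  -- notation
  set J : (n : ℕ) → {p : X → ℝ // p ∈ stdSimplex ℝ X} → ℝ≥0∞ := fun n p =>
    ∫⁻ x, ENNReal.ofReal (φ n x) ∂(Measure.pi fun _ : Fin n => pmfMeasure p.1) with hJdef
  set J0 : ℕ → ℝ≥0∞ := fun n =>
    ∫⁻ x, ENNReal.ofReal (φ n x) ∂(Measure.pi fun _ : Fin n => pmfMeasure p0.1) with hJ0def
  have hJle1 : ∀ n (p : {p : X → ℝ // p ∈ stdSimplex ℝ X}), J n p ≤ 1 := by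
    intro n p
    haveI := pi_pmf_isProb p.2 n
    calc J n p ≤ ∫⁻ _, 1 ∂(Measure.pi fun _ : Fin n => pmfMeasure p.1) :=
          lintegral_mono fun x => ENNReal.ofReal_le_one.2 (hφ01 n x).2
      _ = 1 := by simp
  -- pointwise comparison on A
  have hcomp : ∀ n, ∀ p ∈ A, ENNReal.ofReal ρ ^ n * J0 n ≤ J n p := by
    intro n p hp
    refine lintegral_pi_pmf_compare hρpos.le (fun x => ?_) (fun x => p0.2.1 x) n _
    by_cases hx : p0.1 x = 0
    · simpa [hx] using p.2.1 x
    · exact (hp x hx).le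
  -- L n, the unnormalized predictive lintegral
  set L : ℕ → ℝ≥0∞ := fun n => ∫⁻ p in B, J n p ∂Pri with hLdef
  have hLfin : ∀ n, L n ≠ ⊤ := by
    intro n
    have hle : L n ≤ Pri B := by
      calc L n ≤ ∫⁻ _ in B, 1 ∂Pri := lintegral_mono fun p => hJle1 n p
        _ = Pri B := setLIntegral_one B
    exact (lt_of_le_of_lt (hle.trans prob_le_one) ENNReal.one_lt_top).ne
  have hLlow : ∀ n, Pri (A ∩ B) * (ENNReal.ofReal ρ ^ n * J0 n) ≤ L n := by
    intro n
    calc Pri (A ∩ B) * (ENNReal.ofReal ρ ^ n * J0 n)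
        = ∫⁻ _ in A ∩ B, ENNReal.ofReal ρ ^ n * J0 n ∂Pri := by
          rw [setLIntegral_const, mul_comm]
      _ ≤ ∫⁻ p in A ∩ B, J n p ∂Pri :=
          setLIntegral_mono' ((hAopen.inter hBopen).measurableSet)
            fun p hp => hcomp n p hp.1
      _ ≤ L n := lintegral_mono_set Set.inter_subset_right
  -- the predictive integral
  set g : ℕ → ℝ := fun n => ∫ x, φ n x ∂(
      (Pri B)⁻¹ • ((Pri.restrict B).bind
        (fun p => Measure.pi fun _ : Fin n => pmfMeasure p.1))) with hgdef
  have hbind : ∀ n, g n = (Pri B)⁻¹.toReal * (L n).toReal := by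
    intro n
    simp only [hgdef]
    rw [integral_smul_measure, smul_eq_mul]
    congr 1
    rw [integral_eq_lintegral_of_nonneg_ae (Filter.Eventually.of_forall fun x => (hφ01 n x).1)
      (hφm n).aestronglyMeasurable]
    congr 1
    exact Measure.lintegral_bind (measurable_pi_pmf_kernel n).aemeasurable (hφm n).ennreal_ofReal.aemeasurable
  -- real-valued constants
  set K : ℝ := (Pri B)⁻¹.toReal * (Pri (A ∩ B)).toReal with hKdef
  have hK : 0 < K := by
    apply mul_pos
    · exact ENNReal.toReal_pos (by simp [hcBfin]) (by simp [hcBne])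
    · exact ENNReal.toReal_pos hc2.ne' hc2fin
  -- I0 and its identification
  set I0 : ℕ → ℝ := fun n => ∫ x, φ n x ∂(Measure.pi fun _ : Fin n => pmfMeasure p0.1)
    with hI0def
  have hI0eq : ∀ n, I0 n = (J0 n).toReal := by
    intro n
    simp only [hI0def]
    exact integral_eq_lintegral_of_nonneg_ae (Filter.Eventually.of_forall fun x => (hφ01 n x).1)
      (hφm n).aestronglyMeasurable
  have hI0nonneg : ∀ n, 0 ≤ I0 n := fun n =>
    integral_nonneg fun x => (hφ01 n x).1
  -- the main lower bound in ℝ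
  have hmain : ∀ n, K * (ρ ^ n * I0 n) ≤ g n := by
    intro n
    rw [hbind n, hKdef, hI0eq n]
    have h1 : (Pri (A ∩ B) * (ENNReal.ofReal ρ ^ n * J0 n)).toReal ≤ (L n).toReal :=
      ENNReal.toReal_mono (hLfin n) (hLlow n)
    rw [ENNReal.toReal_mul, ENNReal.toReal_mul, ENNReal.toReal_pow,
      ENNReal.toReal_ofReal hρpos.le] at h1
    calc (Pri B)⁻¹.toReal * (Pri (A ∩ B)).toReal * (ρ ^ n * (J0 n).toReal)
        = (Pri B)⁻¹.toReal * ((Pri (A ∩ B)).toReal * (ρ ^ n * (J0 n).toReal)) := by ring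
      _ ≤ (Pri B)⁻¹.toReal * (L n).toReal :=
          mul_le_mul_of_nonneg_left h1 ENNReal.toReal_nonneg
  -- convert the little-o hypothesis
  have hexp : (fun n : ℕ => Real.exp (-(↑n * ε ^ 2) / 2)) = fun n : ℕ => ρ ^ n := by
    funext n
    rw [hρdef, ← Real.exp_nat_mul]
    ring_nf
  rw [hexp] at h
  have hdiv : Tendsto (fun n => g n / ρ ^ n) atTop (nhds 0) := h.tendsto_div_nhds_zero
  -- squeeze
  refine squeeze_zero hI0nonneg (g := fun n => K⁻¹ * (g n / ρ ^ n)) (fun n => ?_) ?_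
  · show I0 n ≤ K⁻¹ * (g n / ρ ^ n)
    have h1 := hmain n
    have h2 : (0:ℝ) < ρ ^ n := pow_pos hρpos n
    rw [← sub_nonneg] at h1 ⊢
    have heq : K⁻¹ * (g n / ρ ^ n) - I0 n = (g n - K * (ρ ^ n * I0 n)) / (K * ρ ^ n) := by
      field_simp
    rw [heq]
    positivity
  · simpa using hdiv.const_mul K⁻¹
end
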